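/- arXiv:2003.02165 — 7 statements merged into one kernel-verified Lean document; each statement's English description precedes it below -/
import Mathlib

section
/- Let d ≥ 2 and g : [-1,1] → (-∞,∞] be continuous on [-1,1), differentiable on (-1,1) with g' convex on (-1,1), and lim_{t→1⁻} g(t) = g(1). If t_0, t_1, ..., t_d ∈ [-1,1] satisfy ∑ t_i = 0 and ∑ t_i² = (d+1)/d, then g(-1) + d·g(1/d) ≤ ∑_{i=0}^d g(t_i). -/
/-!
Let `q` be the quadratic that agrees with `g` at `-1` and at `1/d` and whose derivative agrees
with `g'` at `1/d`. The two moment conditions give `∑ q(tᵢ) = q(-1) + d q(1/d)`, so it suffices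
that `q ≤ g` on `[-1, 1]`. The derivative of `g - q` is convex, vanishes at `1/d` and, by Rolle,
at some point of `(-1, 1/d)`; hence it is nonnegative to the right of `1/d`. To the left of `1/d`,
a negative value of `g - q` would make its derivative negative and then positive before `1/d`,
which convexity forbids.
-/

open Set

section ConvexDerivative

variable {h h' : ℝ → ℝ} {a b m : ℝ}

lemma exists_hasDerivAt_eq_slope_of_Icc_subset (hcont : ContinuousOn h (Ico a b))
    (hderiv : ∀ s ∈ Ioo a b, HasDerivAt h (h' s) s) {u v : ℝ} (hau : a ≤ u) (huv : u < v)
    (hvb : v < b) : ∃ c ∈ Ioo u v, h' c = (h v - h u) / (v - u) :=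
  exists_hasDerivAt_eq_slope h h' huv
    (hcont.mono fun _ hs => ⟨hau.trans hs.1, hs.2.trans_lt hvb⟩)
    fun s hs => hderiv s ⟨hau.trans_lt hs.1, hs.2.trans hvb⟩

lemma nonneg_of_convexOn_deriv_of_le (hcont : ContinuousOn h (Ico a b))
    (hderiv : ∀ s ∈ Ioo a b, HasDerivAt h (h' s) s) (hconv : ConvexOn ℝ (Ioo a b) h')
    (hmb : m < b) (ha : h a = 0) (hm : h m = 0) (hm' : h' m = 0) :
    ∀ s ∈ Icc a m, 0 ≤ h s := by
  rintro s ⟨has, hsm⟩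
  rcases has.eq_or_lt with rfl | has
  · exact ha.ge
  rcases hsm.eq_or_lt with rfl | hsm
  · exact hm.ge
  by_contra! hs
  obtain ⟨x₁, hx₁, hx₁_eq⟩ :=
    exists_hasDerivAt_eq_slope_of_Icc_subset hcont hderiv le_rfl has (hsm.trans hmb)
  obtain ⟨x₂, hx₂, hx₂_eq⟩ :=
    exists_hasDerivAt_eq_slope_of_Icc_subset hcont hderiv has.le hsm hmb
  have hneg : h' x₁ < 0 := by
    rw [hx₁_eq, ha, sub_zero]; exact div_neg_of_neg_of_pos hs (by linarith)
  have hpos : 0 < h' x₂ := by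
    rw [hx₂_eq, hm, zero_sub]; exact div_pos (by linarith) (by linarith)
  have hx₂m : h' x₂ ≤ h' m := hconv.le_right_of_left_le'' ⟨hx₁.1, by linarith [hx₁.2]⟩
    ⟨by linarith [hx₂.1], hmb⟩ (hx₁.2.trans hx₂.1) hx₂.2.le (by linarith)
  linarith

lemma nonneg_of_convexOn_deriv_of_ge (hcont : ContinuousOn h (Ico a b))
    (hderiv : ∀ s ∈ Ioo a b, HasDerivAt h (h' s) s) (hconv : ConvexOn ℝ (Ioo a b) h')
    (ham : a < m) (ha : h a = 0) (hm : h m = 0) (hm' : h' m = 0) :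
    ∀ s ∈ Ico m b, 0 ≤ h s := by
  intro s hs
  have hmb : m < b := hs.1.trans_lt hs.2
  obtain ⟨x, hx, hx'⟩ := exists_hasDerivAt_eq_zero ham
    (hcont.mono fun _ hs => ⟨hs.1, hs.2.trans_lt hmb⟩) (ha.trans hm.symm)
    fun s hs => hderiv s ⟨hs.1, hs.2.trans hmb⟩
  have hderiv_nonneg : ∀ s ∈ Ioo m b, 0 ≤ h' s := fun s hs =>
    hm' ▸ hconv.le_right_of_left_le'' ⟨hx.1, hx.2.trans hmb⟩ ⟨ham.trans hs.1, hs.2⟩ hx.2 hs.1.le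
      (by rw [hx', hm'])
  have hmono : MonotoneOn h (Ico m b) := by
    refine monotoneOn_of_hasDerivWithinAt_nonneg (f' := h') (convex_Ico m b)
      (hcont.mono (Ico_subset_Ico_left ham.le)) ?_ ?_ <;> rw [interior_Ico]
    · exact fun s hs => (hderiv s ⟨ham.trans hs.1, hs.2⟩).hasDerivWithinAt
    · exact hderiv_nonneg
  exact hm ▸ hmono ⟨le_rfl, hmb⟩ hs hs.1

lemma nonneg_of_convexOn_deriv (hcont : ContinuousOn h (Ico a b))
    (hderiv : ∀ s ∈ Ioo a b, HasDerivAt h (h' s) s) (hconv : ConvexOn ℝ (Ioo a b) h')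
    (ham : a < m) (hmb : m < b) (ha : h a = 0) (hm : h m = 0) (hm' : h' m = 0) :
    ∀ s ∈ Ico a b, 0 ≤ h s := fun s hs =>
  (le_total s m).elim
    (fun hsm => nonneg_of_convexOn_deriv_of_le hcont hderiv hconv hmb ha hm hm' s ⟨hs.1, hsm⟩)
    (fun hms => nonneg_of_convexOn_deriv_of_ge hcont hderiv hconv ham ha hm hm' s ⟨hms, hs.2⟩)

end ConvexDerivative

lemma exists_quadratic_hermite {x m : ℝ} (hxm : x ≠ m) (y₀ y₁ B : ℝ) :
    ∃ p q r : ℝ, p + q * x + r * x ^ 2 = y₀ ∧ p + q * m + r * m ^ 2 = y₁ ∧ q + 2 * r * m = B := by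
  have hsq : (x - m) ^ 2 ≠ 0 := pow_ne_zero 2 (sub_ne_zero.mpr hxm)
  -- the coefficients of `y₁ + B (s - m) + r (s - m)²`
  set r := (y₀ - y₁ - B * (x - m)) / (x - m) ^ 2
  refine ⟨y₁ - B * m + r * m ^ 2, B - 2 * r * m, r, ?_, by ring, by ring⟩
  have : r * (x - m) ^ 2 = y₀ - y₁ - B * (x - m) := div_mul_cancel₀ _ hsq
  linear_combination this

lemma quadratic_le_of_convexOn_deriv {φ φ' : ℝ → ℝ} {a b m p q r : ℝ}
    (hcont : ContinuousOn φ (Ico a b)) (hderiv : ∀ s ∈ Ioo a b, HasDerivAt φ (φ' s) s)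
    (hconv : ConvexOn ℝ (Ioo a b) φ') (ham : a < m) (hmb : m < b)
    (ha : p + q * a + r * a ^ 2 = φ a) (hm : p + q * m + r * m ^ 2 = φ m)
    (hm' : q + 2 * r * m = φ' m) :
    ∀ s ∈ Ico a b, p + q * s + r * s ^ 2 ≤ φ s := by
  have hquad : ∀ s, HasDerivAt (fun s => p + q * s + r * s ^ 2) (q + 2 * r * s) s := fun s =>
    ((((hasDerivAt_id' s).const_mul q).const_add p).add
      (((hasDerivAt_id' s).pow 2).const_mul r)).congr_deriv (by ring)
  have haffine : ConcaveOn ℝ (Ioo a b) (fun s => q + 2 * r * s) :=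
    ⟨convex_Ioo a b, fun x _ y _ u v _ _ huv => le_of_eq <| by
      simp only [smul_eq_mul]; linear_combination q * huv⟩
  intro s hs
  have hnonneg := nonneg_of_convexOn_deriv (h := fun s => φ s - (p + q * s + r * s ^ 2))
    (hcont.sub (by fun_prop)) (fun s hs => (hderiv s hs).sub (hquad s)) (hconv.sub haffine)
    ham hmb (by simp [ha]) (by simp [hm]) (by simp [hm']) s hs
  linarith

lemma sum_quadratic_eq_of_moments {d : ℕ} (hd : d ≠ 0) {t : Fin (d + 1) → ℝ}
    (hsum : ∑ i, t i = 0) (hsq : ∑ i, t i ^ 2 = ((d : ℝ) + 1) / d) (p q r : ℝ) :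
    ∑ i, (p + q * t i + r * t i ^ 2) =
      (p + q * (-1) + r * (-1) ^ 2) + d * (p + q * (1 / d) + r * (1 / d) ^ 2) := by
  rw [Finset.sum_add_distrib, Finset.sum_add_distrib, ← Finset.mul_sum, ← Finset.mul_sum, hsum, hsq]
  simp only [Finset.sum_const, Finset.card_univ, Fintype.card_fin, nsmul_eq_mul]
  field_simp
  push_cast
  ring

theorem stmt_1 (d : ℕ) (hd : 2 ≤ d) (g : ℝ → EReal) (g' : ℝ → ℝ)
    (hne_bot : ∀ t ∈ Set.Icc (-1:ℝ) 1, g t ≠ ⊥)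
    (hfin : ∀ t ∈ Set.Ico (-1:ℝ) 1, g t ≠ ⊤)
    (hcont : ContinuousOn g (Set.Ico (-1:ℝ) 1))
    (hlim : Filter.Tendsto g (nhdsWithin 1 (Set.Iio 1)) (nhds (g 1)))
    (hderiv : ∀ t ∈ Set.Ioo (-1:ℝ) 1, HasDerivAt (fun s => (g s).toReal) (g' t) t)
    (hconv : ConvexOn ℝ (Set.Ioo (-1:ℝ) 1) g')
    (t : Fin (d+1) → ℝ) (ht : ∀ i, t i ∈ Set.Icc (-1:ℝ) 1)
    (hsum : ∑ i, t i = 0) (hsq : ∑ i, (t i)^2 = ((d:ℝ)+1)/(d:ℝ)) :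
    g (-1) + ((d:ℝ) : EReal) * g (1/(d:ℝ)) ≤ ∑ i, g (t i) := by
  have hd₁ : (1 : ℝ) < d := by exact_mod_cast hd
  have hm : 1 / (d : ℝ) ∈ Ioo (-1 : ℝ) 1 :=
    ⟨by linarith [one_div_pos.2 (zero_lt_one.trans hd₁)], (div_lt_one (by linarith)).2 hd₁⟩
  have hgφ : ∀ s ∈ Ico (-1 : ℝ) 1, g s = (g s).toReal := fun s hs =>
    (EReal.coe_toReal (hfin s hs) (hne_bot s (Ico_subset_Icc_self hs))).symm
  have hφcont : ContinuousOn (fun s => (g s).toReal) (Ico (-1 : ℝ) 1) := fun s hs =>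
    (EReal.tendsto_toReal (hfin s hs) (hne_bot s (Ico_subset_Icc_self hs))).comp (hcont s hs)
  obtain ⟨p, q, r, hq_neg, hq_m, hq'_m⟩ :=
    exists_quadratic_hermite hm.1.ne ((g (-1)).toReal) ((g (1 / d)).toReal) (g' (1 / d))
  have hleIco : ∀ s ∈ Ico (-1 : ℝ) 1, ((p + q * s + r * s ^ 2 : ℝ) : EReal) ≤ g s := fun s hs => by
    rw [hgφ s hs, EReal.coe_le_coe_iff]
    exact quadratic_le_of_convexOn_deriv hφcont hderiv hconv hm.1 hm.2 hq_neg hq_m hq'_m s hs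
  have hle : ∀ s ∈ Icc (-1 : ℝ) 1, ((p + q * s + r * s ^ 2 : ℝ) : EReal) ≤ g s := by
    rintro s ⟨hs₁, hs₂⟩
    rcases hs₂.lt_or_eq with hs₂ | rfl
    · exact hleIco s ⟨hs₁, hs₂⟩
    · exact ContinuousWithinAt.closure_le (by simp [closure_Ico (by norm_num : (-1 : ℝ) ≠ 1)])
        (continuous_coe_real_ereal.comp (by fun_prop)).continuousWithinAt
        (hlim.mono_left (nhdsWithin_mono _ Ico_subset_Iio_self)) hleIco
  calc g (-1) + ((d : ℝ) : EReal) * g (1 / d)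
      = ((∑ i, (p + q * t i + r * t i ^ 2) : ℝ) : EReal) := by
        rw [sum_quadratic_eq_of_moments (by omega) hsum hsq, hq_neg, hq_m, EReal.coe_add,
          EReal.coe_mul, ← hgφ _ (Ioo_subset_Ico_self hm), ← hgφ (-1) ⟨le_rfl, by norm_num⟩]
    _ = ∑ i, ((p + q * t i + r * t i ^ 2 : ℝ) : EReal) :=
        map_sum (⟨⟨Real.toEReal, EReal.coe_zero⟩, EReal.coe_add⟩ : ℝ →+ EReal) _ _
    _ ≤ ∑ i, g (t i) := Finset.sum_le_sum fun i _ => hle (t i) (ht i)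
end

section
/- Let d ≥ 2 and g : [-1,1] → ℝ be continuous on [-1,1], differentiable on (-1,1) with g' convex on (-1,1). If t_0, t_1, ..., t_d ∈ [-1,1] satisfy ∑ t_i = 0 and ∑ t_i² = (d+1)/d, then ∑_{i=0}^d g(t_i) ≤ g(1) + d·g(-1/d). -/
/-!
Put `a = -1/d`. Since `g'` is convex, `g` lies below the quadratic `q` that touches `g` to first
order at `a` and meets it at `1`: for `h = g - q`, the convex function `h'` vanishes at `a` and,
by Rolle, at some `ξ ∈ (a, 1)`, so `h` increases on `[-1, a]`, decreases on `[a, ξ]` and increases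
on `[ξ, 1]`, and `h ≤ max (h a) (h 1) = 0`. The sum of a quadratic over the `t_i` depends only on
`∑ t_i` and `∑ t_i²`, which are those of the configuration `(1, a, …, a)`; hence
`∑ g(t_i) ≤ ∑ q(t_i) = q(1) + d q(a) = g(1) + d g(a)`.
-/

open Set Finset

lemma monotoneOn_Icc_of_hasDerivAt_nonneg {f f' : ℝ → ℝ} {x y : ℝ}
    (hf : ContinuousOn f (Icc x y)) (hf' : ∀ z ∈ Ioo x y, HasDerivAt f (f' z) z)
    (hf'₀ : ∀ z ∈ Ioo x y, 0 ≤ f' z) : MonotoneOn f (Icc x y) :=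
  monotoneOn_of_hasDerivWithinAt_nonneg (convex_Icc x y) hf
    (fun z hz ↦ (hf' z (by rwa [interior_Icc] at hz)).hasDerivWithinAt)
    (fun z hz ↦ hf'₀ z (by rwa [interior_Icc] at hz))

lemma antitoneOn_Icc_of_hasDerivAt_nonpos {f f' : ℝ → ℝ} {x y : ℝ}
    (hf : ContinuousOn f (Icc x y)) (hf' : ∀ z ∈ Ioo x y, HasDerivAt f (f' z) z)
    (hf'₀ : ∀ z ∈ Ioo x y, f' z ≤ 0) : AntitoneOn f (Icc x y) :=
  antitoneOn_of_hasDerivWithinAt_nonpos (convex_Icc x y) hf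
    (fun z hz ↦ (hf' z (by rwa [interior_Icc] at hz)).hasDerivWithinAt)
    (fun z hz ↦ hf'₀ z (by rwa [interior_Icc] at hz))

theorem nonpos_of_convexOn_deriv {h h' : ℝ → ℝ} {l r a : ℝ}
    (hcont : ContinuousOn h (Icc l r)) (hderiv : ∀ x ∈ Ioo l r, HasDerivAt h (h' x) x)
    (hconv : ConvexOn ℝ (Ioo l r) h') (ha : a ∈ Ioo l r)
    (hha : h a = 0) (hh'a : h' a = 0) (hhr : h r = 0) :
    ∀ x ∈ Icc l r, h x ≤ 0 := by
  obtain ⟨ξ, ⟨haξ, hξr⟩, hh'ξ⟩ : ∃ ξ ∈ Ioo a r, h' ξ = 0 :=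
    exists_hasDerivAt_eq_zero ha.2 (hcont.mono (Icc_subset_Icc ha.1.le le_rfl))
      (hha.trans hhr.symm) fun x hx ↦ hderiv x ⟨ha.1.trans hx.1, hx.2⟩
  have hξ : ξ ∈ Ioo l r := ⟨ha.1.trans haξ, hξr⟩
  have hmono_left : MonotoneOn h (Icc l a) :=
    monotoneOn_Icc_of_hasDerivAt_nonneg (hcont.mono (Icc_subset_Icc le_rfl ha.2.le))
      (fun x hx ↦ hderiv x ⟨hx.1, hx.2.trans ha.2⟩) fun x hx ↦
        hh'a ▸ hconv.le_left_of_right_le'' ⟨hx.1, hx.2.trans ha.2⟩ hξ hx.2.le haξ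
          (hh'ξ.trans hh'a.symm).le
  have hanti_mid : AntitoneOn h (Icc a ξ) :=
    antitoneOn_Icc_of_hasDerivAt_nonpos (hcont.mono (Icc_subset_Icc ha.1.le hξr.le))
      (fun x hx ↦ hderiv x ⟨ha.1.trans hx.1, hx.2.trans hξr⟩) fun x hx ↦ by
        simpa [hh'a, hh'ξ] using hconv.le_max_of_mem_Icc ha hξ ⟨hx.1.le, hx.2.le⟩
  have hmono_right : MonotoneOn h (Icc ξ r) :=
    monotoneOn_Icc_of_hasDerivAt_nonneg (hcont.mono (Icc_subset_Icc hξ.1.le le_rfl))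
      (fun x hx ↦ hderiv x ⟨hξ.1.trans hx.1, hx.2⟩) fun x hx ↦
        hh'ξ ▸ hconv.le_right_of_left_le'' ha ⟨hξ.1.trans hx.1, hx.2⟩ haξ hx.1.le
          (hh'a.trans hh'ξ.symm).le
  intro x ⟨hlx, hxr⟩
  rcases le_total x a with hxa | hax
  · exact hha ▸ hmono_left ⟨hlx, hxa⟩ ⟨ha.1.le, le_rfl⟩ hxa
  rcases le_total x ξ with hxξ | hξx
  · exact hha ▸ hanti_mid ⟨le_rfl, haξ.le⟩ ⟨hax, hxξ⟩ hax
  · exact hhr ▸ hmono_right ⟨hξx, hxr⟩ ⟨hξr.le, le_rfl⟩ hxr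

/-- The right-hand side is the quadratic with the value and slope of `g` at `a` and the value of
`g` at `r`. -/
theorem le_quadratic_of_convexOn_deriv {g g' : ℝ → ℝ} {l r a : ℝ}
    (hcont : ContinuousOn g (Icc l r)) (hderiv : ∀ x ∈ Ioo l r, HasDerivAt g (g' x) x)
    (hconv : ConvexOn ℝ (Ioo l r) g') (ha : a ∈ Ioo l r) (x : ℝ) (hx : x ∈ Icc l r) :
    g x ≤ g a + g' a * (x - a) + (g r - g a - g' a * (r - a)) / (r - a) ^ 2 * (x - a) ^ 2 := by
  set C := (g r - g a - g' a * (r - a)) / (r - a) ^ 2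
  have hra : r - a ≠ 0 := sub_ne_zero.2 ha.2.ne'
  have hq : ∀ y, HasDerivAt (fun y ↦ g a + g' a * (y - a) + C * (y - a) ^ 2)
      (g' a + 2 * C * (y - a)) y := fun y ↦ by
    have hlin := (hasDerivAt_id' y).sub_const a
    exact (((hlin.const_mul (g' a)).const_add (g a)).add ((hlin.pow 2).const_mul C)).congr_deriv
      (by ring)
  have hconv_sub : ConvexOn ℝ (Ioo l r) fun y ↦ g' y - (g' a + 2 * C * (y - a)) :=
    hconv.sub ⟨convex_Ioo l r, fun _ _ _ _ α β _ _ hαβ ↦ le_of_eq <| by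
      simp only [smul_eq_mul]
      linear_combination (g' a - 2 * C * a) * hαβ⟩
  have := nonpos_of_convexOn_deriv (h := fun y ↦ g y - (g a + g' a * (y - a) + C * (y - a) ^ 2))
    (hcont.sub (by fun_prop)) (fun y hy ↦ (hderiv y hy).sub (hq y)) hconv_sub ha (by simp)
    (by simp) (by simp only [C]; field_simp; ring) x hx
  linarith

theorem stmt_2 (d : ℕ) (hd : 2 ≤ d) (g : ℝ → ℝ) (g' : ℝ → ℝ)
    (hcont : ContinuousOn g (Set.Icc (-1:ℝ) 1))
    (hderiv : ∀ t ∈ Set.Ioo (-1:ℝ) 1, HasDerivAt g (g' t) t)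
    (hconv : ConvexOn ℝ (Set.Ioo (-1:ℝ) 1) g')
    (t : Fin (d+1) → ℝ) (ht : ∀ i, t i ∈ Set.Icc (-1:ℝ) 1)
    (hsum : ∑ i, t i = 0) (hsq : ∑ i, (t i)^2 = ((d:ℝ)+1)/(d:ℝ)) :
    ∑ i, g (t i) ≤ g 1 + (d:ℝ) * g (-1/(d:ℝ)) := by
  have hd1 : (1:ℝ) < d := by exact_mod_cast hd
  set a : ℝ := -1 / d
  have ha : a ∈ Ioo (-1:ℝ) 1 :=
    ⟨by rw [lt_div_iff₀ (by linarith)]; linarith, by rw [div_lt_iff₀ (by linarith)]; linarith⟩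
  set C := (g 1 - g a - g' a * (1 - a)) / (1 - a) ^ 2
  have hmoment₁ : ∑ i, (t i - a) = 1 - a := by
    simp only [sum_sub_distrib, hsum, sum_const, card_univ, Fintype.card_fin, nsmul_eq_mul, a]
    push_cast
    field_simp
    ring
  have hmoment₂ : ∑ i, (t i - a) ^ 2 = (1 - a) ^ 2 := by
    simp only [sub_sq, sum_add_distrib, sum_sub_distrib, ← sum_mul, ← mul_sum, hsum, hsq,
      sum_const, card_univ, Fintype.card_fin, nsmul_eq_mul, a]
    push_cast
    field_simp
    ring
  calc ∑ i, g (t i) ≤ ∑ i, (g a + g' a * (t i - a) + C * (t i - a) ^ 2) :=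
        sum_le_sum fun i _ ↦ le_quadratic_of_convexOn_deriv hcont hderiv hconv ha (t i) (ht i)
    _ = (d + 1) * g a + g' a * (1 - a) + C * (1 - a) ^ 2 := by
        simp only [sum_add_distrib, ← mul_sum, hmoment₁, hmoment₂, sum_const, card_univ,
          Fintype.card_fin, nsmul_eq_mul]
        push_cast
        ring
    _ = g 1 + d * g a := by
        have : 1 - a ≠ 0 := sub_ne_zero.2 ha.2.ne'
        simp only [C]
        field_simp
        ring
end

section
/- Let d ≥ 2 and f : [0,4] → (-∞,∞] be finite and convex on (0,4] with f(0) = lim_{t→0⁺} f(t). Then the function u(t) = f(2+2dt) + d·f(2-2t) is non-increasing on [-1/d, 0]. If f is strictly convex on (0,4], then u is strictly decreasing on [-1/d, 0]. -/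
/-!
For `s < t` in `(-1/d, 0]` the four points `x = 2 + 2ds < x' = 2 + 2dt ≤ 2 ≤ y' = 2 - 2t` and
`y = 2 - 2s > y'` satisfy `x' - x = d (y - y')`. Convexity makes the secant slope of `f` on
`[x, x']` at most the one on `[y', y]`, i.e. `f x' - f x ≤ d (f y - f y')`, which is `u t ≤ u s`
(strictly so for strictly convex `f`). At the endpoint `-1/d` the value `f 0` may be infinite;
there `u` is right continuous, so monotonicity passes to the limit, and strictness follows by going
through an interior midpoint.
-/

open Set Filter Topology

section Slope

variable {𝕜 : Type*} [Field 𝕜] [LinearOrder 𝕜] [IsStrictOrderedRing 𝕜] {s : Set 𝕜}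
  {f : 𝕜 → 𝕜} {x x' y' y k : 𝕜}

theorem ConvexOn.slope_le_slope (hf : ConvexOn 𝕜 s f) (hx : x ∈ s) (hy : y ∈ s)
    (hxx' : x < x') (hx'y' : x' ≤ y') (hy'y : y' < y) : slope f x x' ≤ slope f y' y := by
  have hx' : x' ∈ s := hf.1.ordConnected.out hx hy ⟨hxx'.le, (hx'y'.trans_lt hy'y).le⟩
  have hy' : y' ∈ s := hf.1.ordConnected.out hx hy ⟨(hxx'.trans_le hx'y').le, hy'y.le⟩
  calc slope f x x' ≤ slope f x y := by
        simp only [slope_def_field]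
        exact hf.secant_mono hx hx' hy hxx'.ne' (by order) (by order)
    _ = slope f y x := slope_comm f x y
    _ ≤ slope f y y' := by
        simp only [slope_def_field]
        exact hf.secant_mono hy hx hy' (by order) hy'y.ne (by order)
    _ = slope f y' y := slope_comm f y y'

theorem StrictConvexOn.slope_lt_slope (hf : StrictConvexOn 𝕜 s f) (hx : x ∈ s) (hy : y ∈ s)
    (hxx' : x < x') (hx'y' : x' ≤ y') (hy'y : y' < y) : slope f x x' < slope f y' y := by
  have hx' : x' ∈ s := hf.1.ordConnected.out hx hy ⟨hxx'.le, (hx'y'.trans_lt hy'y).le⟩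
  have hy' : y' ∈ s := hf.1.ordConnected.out hx hy ⟨(hxx'.trans_le hx'y').le, hy'y.le⟩
  calc slope f x x' < slope f x y := by
        simp only [slope_def_field]
        exact hf.secant_strict_mono hx hx' hy hxx'.ne' (by order) (by order)
    _ = slope f y x := slope_comm f x y
    _ < slope f y y' := by
        simp only [slope_def_field]
        exact hf.secant_strict_mono hy hx hy' (by order) hy'y.ne (by order)
    _ = slope f y' y := slope_comm f y y'

theorem ConvexOn.add_mul_le_add_mul (hf : ConvexOn 𝕜 s f) (hx : x ∈ s) (hy : y ∈ s)
    (hxx' : x < x') (hx'y' : x' ≤ y') (hy'y : y' < y) (hk : x' - x = k * (y - y')) :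
    f x' + k * f y' ≤ f x + k * f y := by
  have h := hf.slope_le_slope hx hy hxx' hx'y' hy'y
  have hk0 : 0 < k := (mul_pos_iff_of_pos_right (sub_pos.2 hy'y)).1 (hk ▸ sub_pos.2 hxx')
  rw [slope_def_field, slope_def_field, hk, ← div_div,
    div_le_div_iff_of_pos_right (sub_pos.2 hy'y), div_le_iff₀ hk0] at h
  linarith

theorem StrictConvexOn.add_mul_lt_add_mul (hf : StrictConvexOn 𝕜 s f) (hx : x ∈ s)
    (hy : y ∈ s) (hxx' : x < x') (hx'y' : x' ≤ y') (hy'y : y' < y) (hk : x' - x = k * (y - y')) :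
    f x' + k * f y' < f x + k * f y := by
  have h := hf.slope_lt_slope hx hy hxx' hx'y' hy'y
  have hk0 : 0 < k := (mul_pos_iff_of_pos_right (sub_pos.2 hy'y)).1 (hk ▸ sub_pos.2 hxx')
  rw [slope_def_field, slope_def_field, hk, ← div_div,
    div_lt_div_iff_of_pos_right (sub_pos.2 hy'y), div_lt_iff₀ hk0] at h
  linarith

end Slope

section Order

variable {α β : Type*} [LinearOrder α] [LinearOrder β] {f : α → β} {a b : α}

theorem AntitoneOn.Icc_of_Ioc [TopologicalSpace α] [OrderTopology α] [DenselyOrdered α]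
    [NoMaxOrder α] [TopologicalSpace β] [OrderClosedTopology β] (hf : AntitoneOn f (Ioc a b))
    (ha : Tendsto f (𝓝[>] a) (𝓝 (f a))) : AntitoneOn f (Icc a b) := by
  intro x hx y hy hxy
  rcases hx.1.eq_or_lt with rfl | hax
  · rcases hxy.eq_or_lt with rfl | hxy
    · rfl
    refine ge_of_tendsto ha ?_
    filter_upwards [Ioc_mem_nhdsGT hxy] with z hz
    exact hf ⟨hz.1, hz.2.trans hy.2⟩ ⟨hz.1.trans_le hz.2, hy.2⟩ hz.2
  · exact hf ⟨hax, hx.2⟩ ⟨hax.trans_le hxy, hy.2⟩ hxy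

theorem StrictAntiOn.Icc_of_Ioc [DenselyOrdered α] (hs : StrictAntiOn f (Ioc a b))
    (h : AntitoneOn f (Icc a b)) : StrictAntiOn f (Icc a b) := by
  intro x hx y hy hxy
  rcases hx.1.eq_or_lt with rfl | hax
  · obtain ⟨m, hxm, hmy⟩ := exists_between hxy
    calc f y < f m := hs ⟨hxm, hmy.le.trans hy.2⟩ ⟨hxm.trans hmy, hy.2⟩ hmy
      _ ≤ f a := h hx ⟨hxm.le, hmy.le.trans hy.2⟩ hxm.le
  · exact hs ⟨hax, hx.2⟩ ⟨hax.trans hxy, hy.2⟩ hxy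

end Order

section

variable {c : ℝ} {f : ℝ → EReal} {g : ℝ → ℝ}

lemma evalPoints_mem_Ioc (hc : 1 ≤ c) {t : ℝ} (ht : t ∈ Ioc (-(1 / c)) 0) :
    2 + 2 * c * t ∈ Ioc (0 : ℝ) 4 ∧ 2 - 2 * t ∈ Ioc (0 : ℝ) 4 := by
  have hc0 : 0 < c := by linarith
  have hct : -1 < c * t := by
    have := mul_lt_mul_of_pos_left ht.1 hc0
    rwa [mul_neg, mul_one_div_cancel hc0.ne'] at this
  exact ⟨⟨by linarith, by nlinarith [ht.2]⟩, ⟨by linarith [ht.2], by nlinarith [ht.2]⟩⟩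

lemma antitoneOn_Ioc_of_convexOn (hc : 1 ≤ c) (hg : ConvexOn ℝ (Ioc 0 4) g) :
    AntitoneOn (fun t => g (2 + 2 * c * t) + c * g (2 - 2 * t)) (Ioc (-(1 / c)) 0) := by
  intro s hs t ht hst
  rcases hst.eq_or_lt with rfl | hst
  · rfl
  exact hg.add_mul_le_add_mul (evalPoints_mem_Ioc hc hs).1 (evalPoints_mem_Ioc hc hs).2
    (by nlinarith) (by nlinarith [ht.2]) (by linarith) (by ring)

lemma strictAntiOn_Ioc_of_strictConvexOn (hc : 1 ≤ c) (hg : StrictConvexOn ℝ (Ioc 0 4) g) :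
    StrictAntiOn (fun t => g (2 + 2 * c * t) + c * g (2 - 2 * t)) (Ioc (-(1 / c)) 0) :=
  fun s hs t ht hst => hg.add_mul_lt_add_mul (evalPoints_mem_Ioc hc hs).1
    (evalPoints_mem_Ioc hc hs).2 (by nlinarith) (by nlinarith [ht.2]) (by linarith) (by ring)

lemma eqOn_coe_of_eqOn_Ioc (hc : 1 ≤ c) (hf : EqOn f (fun y => (g y : EReal)) (Ioc 0 4)) :
    EqOn (fun t => f (2 + 2 * c * t) + (c : EReal) * f (2 - 2 * t))
      (fun t => ((g (2 + 2 * c * t) + c * g (2 - 2 * t) : ℝ) : EReal)) (Ioc (-(1 / c)) 0) := by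
  intro t ht
  simp only [hf (evalPoints_mem_Ioc hc ht).1, hf (evalPoints_mem_Ioc hc ht).2]
  norm_cast

lemma tendsto_nhdsGT_neg_one_div (hc : 1 < c) (hg : ConvexOn ℝ (Ioc 0 4) g)
    (hf : EqOn f (fun y => (g y : EReal)) (Ioc 0 4)) (hlim : Tendsto f (𝓝[>] 0) (𝓝 (f 0))) :
    Tendsto (fun t => f (2 + 2 * c * t) + (c : EReal) * f (2 - 2 * t)) (𝓝[>] (-(1 / c)))
      (𝓝 (f (2 + 2 * c * -(1 / c)) + (c : EReal) * f (2 - 2 * -(1 / c)))) := by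
  have hc0 : 0 < c := by linarith
  have hx : 2 + 2 * c * -(1 / c) = 0 := by field_simp; ring
  -- `1 < c` keeps `2 + 2 / c` off the endpoint `4`, where a convex `g` may jump.
  have hy : 2 - 2 * -(1 / c) ∈ Ioo (0 : ℝ) 4 := by
    have : 1 / c < 1 := (div_lt_one hc0).2 hc
    constructor <;> linarith [one_div_pos.2 hc0]
  have hleft : Tendsto (fun t => f (2 + 2 * c * t)) (𝓝[>] (-(1 / c)))
      (𝓝 (f (2 + 2 * c * -(1 / c)))) := by
    rw [hx]
    refine hlim.comp (tendsto_nhdsWithin_iff.2 ⟨?_, ?_⟩)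
    · exact hx ▸ ((Continuous.tendsto (by fun_prop) _).mono_left nhdsWithin_le_nhds)
    · filter_upwards [self_mem_nhdsWithin] with t (ht : -(1 / c) < t)
      show 0 < 2 + 2 * c * t
      nlinarith
  have hfy : (c : EReal) * f (2 - 2 * -(1 / c)) = ((c * g (2 - 2 * -(1 / c)) : ℝ) : EReal) := by
    rw [hf (Ioo_subset_Ioc_self hy)]; rfl
  have hright : ContinuousAt (fun y => (c : EReal) * f y) (2 - 2 * -(1 / c)) := by
    have hgy : ContinuousAt g (2 - 2 * -(1 / c)) :=
      hg.continuousOn_interior.continuousAt (by rwa [interior_Ioc, isOpen_Ioo.mem_nhds_iff])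
    refine (continuous_coe_real_ereal.continuousAt.comp (hgy.const_mul c)).congr ?_
    filter_upwards [isOpen_Ioo.mem_nhds hy] with y hy
    simp [hf (Ioo_subset_Ioc_self hy)]
  have hright' : Tendsto (fun t => (c : EReal) * f (2 - 2 * t)) (𝓝[>] (-(1 / c)))
      (𝓝 ((c : EReal) * f (2 - 2 * -(1 / c)))) :=
    (hright.comp (f := fun t => 2 - 2 * t) (x := -(1 / c)) (by fun_prop)).tendsto.mono_left
      nhdsWithin_le_nhds
  exact (EReal.continuousAt_add (Or.inr (hfy ▸ EReal.coe_ne_bot _))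
    (Or.inr (hfy ▸ EReal.coe_ne_top _))).tendsto.comp (hleft.prodMk_nhds hright')

end

theorem stmt_7 (d : ℕ) (hd : 2 ≤ d) (f : ℝ → EReal)
    (hne_bot : ∀ t ∈ Set.Icc (0:ℝ) 4, f t ≠ ⊥)
    (hfin : ∀ t ∈ Set.Ioc (0:ℝ) 4, f t ≠ ⊤)
    (hconv : ConvexOn ℝ (Set.Ioc (0:ℝ) 4) (fun t => (f t).toReal))
    (hlim : Filter.Tendsto f (nhdsWithin 0 (Set.Ioi 0)) (nhds (f 0))) :
    AntitoneOn (fun t => f (2 + 2*(d:ℝ)*t) + ((d:ℝ) : EReal) * f (2 - 2*t))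
      (Set.Icc (-(1/(d:ℝ))) 0) ∧
    (StrictConvexOn ℝ (Set.Ioc (0:ℝ) 4) (fun t => (f t).toReal) →
      StrictAntiOn (fun t => f (2 + 2*(d:ℝ)*t) + ((d:ℝ) : EReal) * f (2 - 2*t))
        (Set.Icc (-(1/(d:ℝ))) 0)) := by
  have hd₁ : (1 : ℝ) < d := by exact_mod_cast hd
  have hf : EqOn f (fun y => ((f y).toReal : EReal)) (Ioc 0 4) := fun y hy =>
    (EReal.coe_toReal (hfin y hy) (hne_bot y (Ioc_subset_Icc_self hy))).symm
  have hu := (eqOn_coe_of_eqOn_Ioc hd₁.le hf).symm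
  have hanti := ((EReal.coe_strictMono.monotone.comp_antitoneOn
    (antitoneOn_Ioc_of_convexOn hd₁.le hconv)).congr hu).Icc_of_Ioc
      (tendsto_nhdsGT_neg_one_div hd₁ hconv hf hlim)
  exact ⟨hanti, fun hsc => ((EReal.coe_strictMono.comp_strictAntiOn
    (strictAntiOn_Ioc_of_strictConvexOn hd₁.le hsc)).congr hu).Icc_of_Ioc hanti⟩
end

section
/- For every d ≥ 2, any (d+1)-point configuration ω = {v_0,...,v_d} ⊂ S^{d-1} satisfies η(ω, S^{d-1}) := max_{x ∈ S^{d-1}} min_{0≤i≤d} |x - v_i| ≥ √(2 - 2/d), with equality if and only if ω is the set of vertices of a regular d-simplex inscribed in S^{d-1}. In particular, the optimal (d+1)-point covering radius of S^{d-1} is √(2 - 2/d). -/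
/-!
Write `μ` for the largest `m` such that the caps `{x | m ≤ ⟪v i, x⟫}` cover the unit sphere.
Since `‖x - v i‖² = 2 - 2 ⟪v i, x⟫` on the sphere, the covering radius is `√(2 - 2 μ)`, so the
claim is `d μ ≤ 1`, with equality exactly for the regular simplex.

If `μ > 0`, no direction `y` has `⟪v i, y⟫ > 0` for all `i` (`-y` would avoid every cap), so
`∑ w i • v i = 0` for some convex weights `w`; and the polytope `{x | ∀ i, ⟪v i, x⟫ ≤ μ}` lies in
the unit ball. Its vertex minimising `⟪v j, ·⟫` is a point `z j` of the ball with
`⟪v i, z j⟫ = μ` for all `i ≠ j`. Pairing `∑ w i • v i = 0` with `z j` gives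
`(1 - w j) μ ≤ w j`, and summing over `j` gives `d μ ≤ 1`. In the equality case every
`z j = -v j`, whence `⟪v i, v j⟫ = -μ`.

Conversely, the vertices of a regular simplex span `ℝᵈ`, satisfy `∑ ⟪v i, x⟫ = 0` and form a
tight frame, `∑ ⟪v i, x⟫² = (1 + 1/d) ‖x‖²`; with `⟪v i, x⟫ ≥ -1` this forces
`max ⟪v i, x⟫ ≥ 1/d`.
-/

open RealInnerProductSpace Metric Module Set Filter Topology

theorem IsCompact.exists_mem_extremePoints_isMaxOn {E : Type*} [AddCommGroup E] [Module ℝ E]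
    [TopologicalSpace E] [T2Space E] [IsTopologicalAddGroup E] [ContinuousSMul ℝ E]
    [LocallyConvexSpace ℝ E] {s : Set E} (hs : IsCompact s) (hne : s.Nonempty) (l : E →L[ℝ] ℝ) :
    ∃ z ∈ s.extremePoints ℝ, IsMaxOn l s z := by
  obtain ⟨z₀, hz₀s, hz₀⟩ := hs.exists_isMaxOn hne l.continuous.continuousOn
  have hF : IsExposed ℝ s {x ∈ s | ∀ y ∈ s, l y ≤ l x} := fun _ => ⟨l, rfl⟩
  obtain ⟨z, hz⟩ := (hF.isCompact hs).extremePoints_nonempty ⟨z₀, hz₀s, fun y hy => hz₀ hy⟩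
  exact ⟨z, hF.isExtreme.extremePoints_subset_extremePoints hz, hz.1.2⟩

variable {E ι : Type*} [NormedAddCommGroup E] [InnerProductSpace ℝ E]

theorem span_eq_top_of_mem_extremePoints [FiniteDimensional ℝ E] [Finite ι] {v : ι → E} {m : ℝ}
    {z : E} (hz : z ∈ {x | ∀ i, ⟪v i, x⟫ ≤ m}.extremePoints ℝ) :
    Submodule.span ℝ (v '' {i | ⟪v i, z⟫ = m}) = ⊤ := by
  -- Otherwise `z` can move both ways along a direction orthogonal to all tight constraints.
  by_contra hK
  obtain ⟨y, hy, hy0⟩ :=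
    Submodule.exists_mem_ne_zero_of_ne_bot (mt Submodule.orthogonal_eq_bot_iff.mp hK)
  have hmove : ∀ᶠ t in 𝓝 (0 : ℝ), ∀ i, ⟪v i, z + t • y⟫ ≤ m ∧ ⟪v i, z - t • y⟫ ≤ m := by
    refine eventually_all.2 fun i => ?_
    rcases (hz.1 i).eq_or_lt with hi | hi
    · have hyi : ⟪v i, y⟫ = 0 := hy _ (Submodule.subset_span ⟨i, hi, rfl⟩)
      exact .of_forall fun t => by
        simp [inner_add_right, inner_sub_right, real_inner_smul_right, hyi, hi]
    · have hc : Continuous fun t : ℝ => (⟪v i, z + t • y⟫, ⟪v i, z - t • y⟫) := by fun_prop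
      have := (hc.tendsto 0).eventually
        (prod_mem_nhds (gt_mem_nhds (by simpa using hi)) (gt_mem_nhds (by simpa using hi)))
      exact this.mono fun t ht => ⟨ht.1.le, ht.2.le⟩
  obtain ⟨t, ht, ht0⟩ := (hmove.and_frequently (frequently_gt_nhds 0)).exists
  have hzt : z + t • y = z :=
    hz.2 (fun i => (ht i).1) (fun i => (ht i).2) (mem_openSegment_add_sub z (t • y))
  simp [ht0.ne', hy0] at hzt

theorem exists_mem_stdSimplex_sum_smul_eq_zero [CompleteSpace E] [Fintype ι] {v : ι → E}
    (h : ∀ y, ∃ i, ⟪v i, y⟫ ≤ 0) : ∃ w ∈ stdSimplex ℝ ι, ∑ i, w i • v i = 0 := by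
  classical
  let L : (ι → ℝ) →L[ℝ] E := ∑ i, (ContinuousLinearMap.proj i).smulRight (v i)
  have hL : ∀ w, L w = ∑ i, w i • v i := fun w => by simp [L]
  by_contra! h0
  obtain ⟨f, u, hf0, hfu⟩ := geometric_hahn_banach_point_closed
    ((convex_stdSimplex ℝ ι).linear_image L.toLinearMap)
    ((isCompact_stdSimplex ℝ ι).image L.continuous).isClosed
    (x := 0) (by rintro ⟨w, hw, hw0⟩; exact h0 w hw (hL w ▸ hw0))
  obtain ⟨i, hi⟩ := h ((InnerProductSpace.toDual ℝ E).symm f)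
  have := hfu (v i) ⟨Pi.single i 1, single_mem_stdSimplex ℝ i, by simp [hL]⟩
  rw [real_inner_comm, InnerProductSpace.toDual_symm_apply] at hi
  rw [map_zero] at hf0
  linarith

theorem inner_eq_neg_one_iff_of_norm_le_one {x z : E} (hx : ‖x‖ = 1) (hz : ‖z‖ ≤ 1) :
    ⟪x, z⟫ = -1 ↔ z = -x := by
  refine ⟨fun h => ?_, by rintro rfl; simp [hx]⟩
  have : ‖z + x‖ ^ 2 ≤ 0 := by
    rw [norm_add_sq_real, real_inner_comm, h, hx]
    nlinarith [norm_nonneg z]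
  exact eq_neg_of_add_eq_zero_left (norm_eq_zero.1 (by nlinarith [norm_nonneg (z + x)]))

theorem neg_one_le_inner_of_norm_le_one {x z : E} (hx : ‖x‖ = 1) (hz : ‖z‖ ≤ 1) :
    -1 ≤ ⟪x, z⟫ :=
  (abs_le.1 ((abs_real_inner_le_norm x z).trans (by rw [hx, one_mul]; exact hz))).1

theorem mul_inner_add_one_sub_mul_eq_zero [Fintype ι] {v : ι → E} {w : ι → ℝ} {m : ℝ} {z : E}
    {j : ι} (hw1 : ∑ i, w i = 1) (hw : ∑ i, w i • v i = 0) (hz : ∀ i, i ≠ j → ⟪v i, z⟫ = m) :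
    w j * ⟪v j, z⟫ + (1 - w j) * m = 0 := by
  classical
  have h0 : ∑ i, w i * ⟪v i, z⟫ = 0 := by simp [← real_inner_smul_left, ← sum_inner, hw]
  rw [← Finset.add_sum_erase _ _ (Finset.mem_univ j)] at h0 hw1
  rwa [Finset.sum_congr rfl fun i hi => by rw [hz i (Finset.ne_of_mem_erase hi)],
    ← Finset.sum_mul, eq_sub_of_add_eq' hw1] at h0

theorem finrank_pos_of_norm_eq_one [FiniteDimensional ℝ E] {x : E} (hx : ‖x‖ = 1) :
    0 < finrank ℝ E :=
  Module.finrank_pos_iff_exists_ne_zero.2 ⟨x, norm_ne_zero_iff.1 (by simp [hx])⟩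

def CapsCoverSphere (v : ι → E) (m : ℝ) : Prop :=
  ∀ x : E, ‖x‖ = 1 → ∃ i, m ≤ ⟪v i, x⟫

namespace CapsCoverSphere

variable {v : ι → E} {m : ℝ}

theorem subset_closedBall (h : CapsCoverSphere v m) (hm : 0 < m) :
    {x | ∀ i, ⟪v i, x⟫ ≤ m} ⊆ closedBall 0 1 := by
  intro x hx
  rw [mem_closedBall_zero_iff]
  by_contra! hx1
  have hx0 : ‖x‖ ≠ 0 := by positivity
  obtain ⟨i, hi⟩ := h (‖x‖⁻¹ • x) (by simp [norm_smul, hx0])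
  rw [real_inner_smul_right] at hi
  have : ‖x‖⁻¹ * ⟪v i, x⟫ < m := calc
    ‖x‖⁻¹ * ⟪v i, x⟫ ≤ ‖x‖⁻¹ * m := by gcongr; exact hx i
    _ < 1 * m := by gcongr; exact inv_lt_one_of_one_lt₀ hx1
    _ = m := one_mul m
  linarith

theorem exists_mem_stdSimplex_sum_smul_eq_zero [CompleteSpace E] [Fintype ι] [Nonempty ι]
    (h : CapsCoverSphere v m) (hm : 0 ≤ m) : ∃ w ∈ stdSimplex ℝ ι, ∑ i, w i • v i = 0 := by
  refine _root_.exists_mem_stdSimplex_sum_smul_eq_zero fun y => ?_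
  rcases eq_or_ne y 0 with rfl | hy
  · exact ⟨Classical.arbitrary ι, by simp⟩
  obtain ⟨i, hi⟩ := h (-(‖y‖⁻¹ • y)) (by simp [norm_smul, hy])
  refine ⟨i, ?_⟩
  rw [inner_neg_right, real_inner_smul_right] at hi
  by_contra! hpos
  linarith [mul_pos (inv_pos.2 (norm_pos_iff.2 hy)) hpos]

variable [FiniteDimensional ℝ E] [Fintype ι]

theorem exists_facet_point (hcard : Fintype.card ι = finrank ℝ E + 1)
    (h : CapsCoverSphere v m) (hm : 0 < m) (j : ι) :
    ∃ z : E, ‖z‖ ≤ 1 ∧ ∀ i, i ≠ j → ⟪v i, z⟫ = m := by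
  classical
  set P := {x | ∀ i, ⟪v i, x⟫ ≤ m}
  have hPball := h.subset_closedBall hm
  have hPclosed : IsClosed P := by
    simp only [P, ofPred_forall]
    exact isClosed_iInter fun i => isClosed_le (by fun_prop) continuous_const
  have hP0 : (0 : E) ∈ P := fun i => by simpa using hm.le
  -- A vertex of `P` minimising `⟪v j, ·⟫`: at least `finrank ℝ E` constraints are tight there,
  -- and the one of `v j` is not.
  obtain ⟨z, hzP, hzmax⟩ :=
    (isCompact_of_isClosed_isBounded hPclosed (isBounded_closedBall.subset hPball)
      ).exists_mem_extremePoints_isMaxOn ⟨0, hP0⟩ (-innerSL ℝ (v j))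
  have hj : ⟪v j, z⟫ < m := by
    have : -⟪v j, 0⟫ ≤ -⟪v j, z⟫ := hzmax hP0
    rw [inner_zero_right, neg_zero, neg_nonneg] at this
    linarith
  set A := Finset.univ.filter fun i => ⟪v i, z⟫ = m
  have hA : finrank ℝ E ≤ A.card := by
    have hspan := span_eq_top_of_mem_extremePoints hzP
    calc finrank ℝ E = finrank ℝ (Submodule.span ℝ ((A.image v : Finset E) : Set E)) := by
          have hAv : (A.image v : Set E) = v '' {i | ⟪v i, z⟫ = m} := by simp [A]
          rw [hAv, hspan, finrank_top]
      _ ≤ (A.image v).card := finrank_span_finset_le_card _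
      _ ≤ A.card := Finset.card_image_le
  have hAj : A = Finset.univ.erase j := by
    refine Finset.eq_of_subset_of_card_le (fun i hi => ?_) ?_
    · exact Finset.mem_erase.2 ⟨by rintro rfl; simp [A] at hi; linarith, Finset.mem_univ i⟩
    · rw [Finset.card_erase_of_mem (Finset.mem_univ j), Finset.card_univ, hcard]; simpa using hA
  refine ⟨z, mem_closedBall_zero_iff.1 (hPball hzP.1), fun i hij => ?_⟩
  have : i ∈ A := hAj ▸ Finset.mem_erase.2 ⟨hij, Finset.mem_univ i⟩
  simpa [A] using this

theorem exists_weights_facet_points (hcard : Fintype.card ι = finrank ℝ E + 1)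
    (h : CapsCoverSphere v m) (hm : 0 < m) :
    ∃ w ∈ stdSimplex ℝ ι, ∃ z : ι → E, ∀ j, ‖z j‖ ≤ 1 ∧ (∀ i, i ≠ j → ⟪v i, z j⟫ = m) ∧
      w j * ⟪v j, z j⟫ + (1 - w j) * m = 0 := by
  have : Nonempty ι := Fintype.card_pos_iff.1 (by omega)
  obtain ⟨w, hw, hw0⟩ := h.exists_mem_stdSimplex_sum_smul_eq_zero hm.le
  choose z hz1 hz using h.exists_facet_point hcard hm
  exact ⟨w, hw, z, fun j => ⟨hz1 j, hz j, mul_inner_add_one_sub_mul_eq_zero hw.2 hw0 (hz j)⟩⟩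

theorem finrank_mul_le_one (hcard : Fintype.card ι = finrank ℝ E + 1)
    (hv : ∀ i, ‖v i‖ = 1) (h : CapsCoverSphere v m) (hm : 0 < m) :
    finrank ℝ E * m ≤ 1 := by
  obtain ⟨w, hw, z, hz⟩ := h.exists_weights_facet_points hcard hm
  have hle : ∀ j, (1 - w j) * m ≤ w j := fun j => by
    nlinarith [hw.1 j, (hz j).2.2, neg_one_le_inner_of_norm_le_one (hv j) (hz j).1]
  calc finrank ℝ E * m = ∑ j, (1 - w j) * m := by
        simp [← Finset.sum_mul, Finset.sum_sub_distrib, hw.2, hcard]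
    _ ≤ ∑ j, w j := Finset.sum_le_sum fun j _ => hle j
    _ = 1 := hw.2

theorem inner_eq_neg_of_finrank_mul_eq_one (hcard : Fintype.card ι = finrank ℝ E + 1)
    (hv : ∀ i, ‖v i‖ = 1) (h : CapsCoverSphere v m) (hm : 0 < m) (heq : finrank ℝ E * m = 1)
    {i j : ι} (hij : i ≠ j) : ⟪v i, v j⟫ = -m := by
  obtain ⟨w, hw, z, hz⟩ := h.exists_weights_facet_points hcard hm
  have hgap : ∀ k, 0 ≤ w k - (1 - w k) * m := fun k => by
    nlinarith [hw.1 k, (hz k).2.2, neg_one_le_inner_of_norm_le_one (hv k) (hz k).1]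
  have hsum : ∑ k, (w k - (1 - w k) * m) = 0 := by
    simp [← Finset.sum_mul, Finset.sum_sub_distrib, hw.2, hcard]
    linarith
  have hwj : w j = (1 - w j) * m :=
    sub_eq_zero.1 ((Finset.sum_eq_zero_iff_of_nonneg fun k _ => hgap k).1 hsum j (by simp))
  have hwj0 : 0 < w j := by
    rcases (hw.1 j).eq_or_lt with h0 | h0
    · rw [← h0] at hwj; linarith
    · exact h0
  have hzj : z j = -v j := by
    refine (inner_eq_neg_one_iff_of_norm_le_one (hv j) (hz j).1).1 ?_
    have := (hz j).2.2
    rw [← hwj] at this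
    nlinarith
  rw [← neg_neg (v j), ← hzj, inner_neg_right, (hz j).2.1 i hij]

end CapsCoverSphere

theorem exists_le_of_sum_eq_zero_of_sum_sq_eq [Fintype ι] {n : ℕ} (hn : 0 < n)
    (hcard : Fintype.card ι = n + 1) {c : ι → ℝ} (hc : ∀ i, -1 ≤ c i) (hsum : ∑ i, c i = 0)
    (hsq : ∑ i, c i ^ 2 = 1 + 1 / n) :
    ∃ i, 1 / n ≤ c i := by
  by_contra! hlt
  have hexp : ∑ i, (1 / n - c i) * (c i + 1) = 0 := by
    simp only [show ∀ i, (1 / n - c i) * (c i + 1) = 1 / n + (1 / n - 1) * c i - c i ^ 2 by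
      intro i; ring]
    simp [Finset.sum_add_distrib, Finset.sum_sub_distrib, ← Finset.mul_sum, hsum, hsq, hcard]
    field_simp
    ring
  have hzero := (Finset.sum_eq_zero_iff_of_nonneg fun i _ =>
    mul_nonneg (sub_nonneg.2 (hlt i).le) (neg_le_iff_add_nonneg.1 (hc i))).1 hexp
  have hneg : ∀ i, c i = -1 := fun i => by
    rcases mul_eq_zero.1 (hzero i (Finset.mem_univ i)) with h | h
    · linarith [hlt i]
    · linarith
  simp [hneg, hcard] at hsum
  linarith

section Regular

variable [Fintype ι] {v : ι → E}

theorem inner_sum_smul_of_inner_eq (hv : ∀ i, ‖v i‖ = 1)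
    (hreg : ∀ i j, i ≠ j → ⟪v i, v j⟫ = -1 / finrank ℝ E) (a : ι → ℝ) (j : ι) :
    ⟪v j, ∑ i, a i • v i⟫ = (1 + 1 / finrank ℝ E) * a j - 1 / finrank ℝ E * ∑ i, a i := by
  classical
  have hG : ∀ i, ⟪v j, v i⟫ = (1 + 1 / finrank ℝ E) * (if i = j then 1 else 0) - 1 / finrank ℝ E :=
    fun i => by
      split_ifs with h
      · simp [h, hv]
      · rw [hreg j i (Ne.symm h)]; ring
  simp only [inner_sum, real_inner_smul_right, hG]
  simp [mul_sub, Finset.sum_sub_distrib, ← Finset.sum_mul, mul_comm]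

variable [FiniteDimensional ℝ E]

theorem span_range_eq_top_of_inner_eq (hcard : Fintype.card ι = finrank ℝ E + 1)
    (hv : ∀ i, ‖v i‖ = 1) (hreg : ∀ i j, i ≠ j → ⟪v i, v j⟫ = -1 / finrank ℝ E) :
    Submodule.span ℝ (range v) = ⊤ := by
  have : Nonempty ι := Fintype.card_pos_iff.1 (by omega)
  have hn : (finrank ℝ E : ℝ) ≠ 0 :=
    (Nat.cast_pos.2 (finrank_pos_of_norm_eq_one (hv (Classical.arbitrary ι)))).ne'
  rw [← Fintype.range_linearCombination]
  set L := Fintype.linearCombination ℝ v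
  have hker : LinearMap.ker L ≤ ℝ ∙ (fun _ => (1 : ℝ)) := fun a ha => by
    have hconst : ∀ j, a j = (∑ i, a i) / (finrank ℝ E + 1) := fun j => by
      have h := inner_sum_smul_of_inner_eq hv hreg a j
      rw [← Fintype.linearCombination_apply, LinearMap.mem_ker.1 ha, inner_zero_right] at h
      field_simp at h ⊢
      linarith
    exact Submodule.mem_span_singleton.2
      ⟨(∑ i, a i) / (finrank ℝ E + 1), funext fun j => by simp [hconst j]⟩
  have hrank := L.finrank_range_add_finrank_ker
  have hker1 := (Submodule.finrank_mono hker).trans_eq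
    (finrank_span_singleton (fun h => one_ne_zero (congrFun h (Classical.arbitrary ι))))
  rw [Module.finrank_fintype_fun_eq_card, hcard] at hrank
  exact Submodule.eq_top_of_finrank_eq (le_antisymm (Submodule.finrank_le _) (by omega))

theorem capsCoverSphere_of_inner_eq (hcard : Fintype.card ι = finrank ℝ E + 1)
    (hv : ∀ i, ‖v i‖ = 1) (hreg : ∀ i j, i ≠ j → ⟪v i, v j⟫ = -1 / finrank ℝ E) :
    CapsCoverSphere v (1 / finrank ℝ E) := by
  intro x hx
  obtain ⟨a, rfl⟩ := (Submodule.mem_span_range_iff_exists_fun ℝ).1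
    ((span_range_eq_top_of_inner_eq hcard hv hreg).symm ▸ Submodule.mem_top (x := x))
  set n : ℝ := (finrank ℝ E : ℝ)
  have hn : n ≠ 0 := (Nat.cast_pos.2 (finrank_pos_of_norm_eq_one hx)).ne'
  set c := fun j => ⟪v j, ∑ i, a i • v i⟫
  have hc : ∀ j, c j = (1 + 1 / n) * a j - 1 / n * ∑ i, a i :=
    inner_sum_smul_of_inner_eq hv hreg a
  have hsum : ∑ j, c j = 0 := by
    simp only [hc, Finset.sum_sub_distrib, ← Finset.mul_sum, Finset.sum_const, Finset.card_univ,
      hcard, nsmul_eq_mul]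
    field_simp
    push_cast
    ring
  have hnorm : ∑ j, a j * c j = 1 := by
    simp only [c, ← real_inner_smul_left, ← sum_inner, real_inner_self_eq_norm_sq, hx, one_pow]
  have hsq : ∑ j, c j ^ 2 = 1 + 1 / n := by
    calc ∑ j, c j ^ 2 = ∑ j, ((1 + 1 / n) * (a j * c j) - 1 / n * (∑ i, a i) * c j) :=
          Finset.sum_congr rfl fun j _ => by rw [sq]; nth_rw 1 [hc j]; ring
      _ = (1 + 1 / n) * ∑ j, a j * c j - 1 / n * (∑ i, a i) * ∑ j, c j := by
          rw [Finset.sum_sub_distrib, ← Finset.mul_sum, ← Finset.mul_sum]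
      _ = 1 + 1 / n := by rw [hnorm, hsum]; ring
  exact exists_le_of_sum_eq_zero_of_sum_sq_eq (finrank_pos_of_norm_eq_one hx) hcard
    (fun j => neg_one_le_inner_of_norm_le_one (hv j) hx.le) hsum hsq

end Regular

theorem exists_regular_simplex [FiniteDimensional ℝ E] [Fintype ι] {n : ℕ}
    (hdim : finrank ℝ E = n) (hcard : Fintype.card ι = n + 1) (hn : 0 < n) :
    ∃ v : ι → E, (∀ i, ‖v i‖ = 1) ∧ ∀ i j, i ≠ j → ⟪v i, v j⟫ = -1 / n := by
  classical
  let e : ι → EuclideanSpace ℝ ι := fun i => EuclideanSpace.single i 1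
  let s : EuclideanSpace ℝ ι := WithLp.toLp 2 fun _ => 1
  have hee : ∀ i j, ⟪e i, e j⟫ = if i = j then 1 else 0 := fun i j => by
    rw [EuclideanSpace.inner_single_left]; simp [e]
  have hes : ∀ i, ⟪e i, s⟫ = 1 := fun i => by rw [EuclideanSpace.inner_single_left]; simp [s]
  have hse : ∀ i, ⟪s, e i⟫ = 1 := fun i => by rw [real_inner_comm, hes]
  have hss : ⟪s, s⟫ = n + 1 := by rw [PiLp.inner_apply]; simp [s, hcard]
  let w : ι → EuclideanSpace ℝ ι := fun i => e i - (n + 1 : ℝ)⁻¹ • s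
  have hw : ∀ i j, ⟪w i, w j⟫ = (if i = j then 1 else 0) - (n + 1 : ℝ)⁻¹ := fun i j => by
    simp only [w, inner_sub_left, inner_sub_right, real_inner_smul_left, real_inner_smul_right,
      hee, hes, hse, hss]
    field_simp
    ring
  have hH : ∀ i, w i ∈ (ℝ ∙ s)ᗮ := fun i => by
    rw [Submodule.mem_orthogonal_singleton_iff_inner_right]
    simp only [w, inner_sub_right, real_inner_smul_right, hse, hss]
    field_simp
    ring
  have hdimH : finrank ℝ (ℝ ∙ s)ᗮ = n := by
    have := Submodule.finrank_add_finrank_orthogonal (ℝ ∙ s)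
    rw [finrank_span_singleton (fun h => by simp [h] at hss; linarith), finrank_euclideanSpace,
      hcard] at this
    omega
  let U := (stdOrthonormalBasis ℝ (ℝ ∙ s)ᗮ).equiv (stdOrthonormalBasis ℝ E)
    (finCongr (hdimH.trans hdim.symm))
  let v := fun i => √((n + 1) / n) • U ⟨w i, hH i⟩
  have hv : ∀ i j, ⟪v i, v j⟫ = (n + 1) / n * ⟪w i, w j⟫ := fun i j => by
    simp only [v, real_inner_smul_left, real_inner_smul_right, LinearIsometryEquiv.inner_map_map,
      Submodule.coe_inner]
    rw [← mul_assoc, Real.mul_self_sqrt (by positivity)]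
  refine ⟨v, fun i => ?_, fun i j hij => ?_⟩
  · rw [norm_eq_sqrt_real_inner, hv, hw, if_pos rfl]
    field_simp
    simp [hn.ne']
  · rw [hv, hw, if_neg hij]
    field_simp
    ring

noncomputable def coverHeight (v : ι → E) : ℝ :=
  ⨅ x : sphere (0 : E) 1, ⨆ i, ⟪v i, (x : E)⟫

theorem CapsCoverSphere.le_coverHeight [Finite ι] [Nonempty (sphere (0 : E) 1)] {v : ι → E} {m : ℝ}
    (h : CapsCoverSphere v m) : m ≤ coverHeight v :=
  le_ciInf fun x =>
    let ⟨i, hi⟩ := h x (by simp)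
    hi.trans (le_ciSup (f := fun i => ⟪v i, (x : E)⟫) (Finite.bddAbove_range _) i)

section CoverHeight

variable [Finite ι] [Nonempty ι] (v : ι → E)

theorem bddBelow_range_iSup_inner :
    BddBelow (range fun x : sphere (0 : E) 1 => ⨆ i, ⟪v i, (x : E)⟫) := by
  let i := Classical.arbitrary ι
  refine ⟨-‖v i‖, forall_mem_range.2 fun x => ?_⟩
  have : |⟪v i, (x : E)⟫| ≤ ‖v i‖ := (abs_real_inner_le_norm _ _).trans_eq (by simp)
  exact (neg_le_of_abs_le this).trans
    (le_ciSup (f := fun i => ⟪v i, (x : E)⟫) (Finite.bddAbove_range _) i)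

theorem capsCoverSphere_coverHeight : CapsCoverSphere v (coverHeight v) := fun x hx => by
  obtain ⟨i, hi⟩ := exists_eq_ciSup_of_finite (f := fun i => ⟪v i, x⟫)
  exact ⟨i, hi ▸ ciInf_le (bddBelow_range_iSup_inner v) ⟨x, by simpa using hx⟩⟩

theorem iSup_iInf_dist_eq_sqrt {v : ι → E} (hv : ∀ i, ‖v i‖ = 1) :
    (⨆ x : sphere (0 : E) 1, ⨅ i, dist (x : E) (v i)) = √(2 - 2 * coverHeight v) := by
  have : Nonempty (sphere (0 : E) 1) := ⟨⟨v (Classical.arbitrary ι), by simp [hv]⟩⟩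
  let f : ℝ → ℝ := fun t => √(2 - 2 * t)
  have hf : Antitone f := fun a b hab => Real.sqrt_le_sqrt (by linarith)
  have hfc : Continuous f := by fun_prop
  have hdist : ∀ x : sphere (0 : E) 1, ∀ i, dist (x : E) (v i) = f ⟪v i, x⟫ := fun x i => by
    rw [dist_eq_norm, ← Real.sqrt_sq (norm_nonneg _), norm_sub_sq_real, real_inner_comm,
      norm_eq_of_mem_sphere, hv]
    congr 1
    ring
  simp only [hdist]
  change _ = f (coverHeight v)
  rw [coverHeight, hf.map_ciInf_of_continuousAt hfc.continuousAt (bddBelow_range_iSup_inner v)]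
  congr 1
  ext x
  exact (hf.map_ciSup_of_continuousAt hfc.continuousAt (Finite.bddAbove_range _)).symm

end CoverHeight

section Simplex

variable [FiniteDimensional ℝ E] [Fintype ι] {v : ι → E} {n : ℕ}
  (hdim : finrank ℝ E = n) (hcard : Fintype.card ι = n + 1) (hv : ∀ i, ‖v i‖ = 1)
include hdim hcard hv

theorem one_le_of_finrank_eq : 1 ≤ n := by
  have : Nonempty ι := Fintype.card_pos_iff.1 (by omega)
  exact hdim ▸ finrank_pos_of_norm_eq_one (hv (Classical.arbitrary ι))

theorem coverHeight_le : coverHeight v ≤ 1 / n := by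
  have : Nonempty ι := Fintype.card_pos_iff.1 (by omega)
  rcases le_or_gt (coverHeight v) 0 with h | h
  · exact h.trans (by positivity)
  · rw [le_div_iff₀ (by exact_mod_cast one_le_of_finrank_eq hdim hcard hv), mul_comm]
    subst hdim
    exact (capsCoverSphere_coverHeight v).finrank_mul_le_one hcard hv h

theorem coverHeight_eq_iff : coverHeight v = 1 / n ↔ ∀ i j, i ≠ j → ⟪v i, v j⟫ = -1 / n := by
  have : Nonempty ι := Fintype.card_pos_iff.1 (by omega)
  have : Nonempty (sphere (0 : E) 1) := ⟨⟨v (Classical.arbitrary ι), by simp [hv]⟩⟩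
  have hn : (1 : ℝ) ≤ n := by exact_mod_cast one_le_of_finrank_eq hdim hcard hv
  subst hdim
  refine ⟨fun h i j hij => ?_, fun hreg => le_antisymm (coverHeight_le rfl hcard hv)
    (capsCoverSphere_of_inner_eq hcard hv hreg).le_coverHeight⟩
  rw [(capsCoverSphere_coverHeight v).inner_eq_neg_of_finrank_mul_eq_one hcard hv
    (h ▸ by positivity) (by rw [h]; field_simp) hij, h, neg_div]

theorem sqrt_le_iSup_iInf_dist :
    √(2 - 2 / n) ≤ ⨆ x : sphere (0 : E) 1, ⨅ i, dist (x : E) (v i) := by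
  have : Nonempty ι := Fintype.card_pos_iff.1 (by omega)
  have := coverHeight_le hdim hcard hv
  rw [iSup_iInf_dist_eq_sqrt hv]
  exact Real.sqrt_le_sqrt (by rw [div_eq_mul_one_div]; linarith)

theorem iSup_iInf_dist_eq_iff :
    (⨆ x : sphere (0 : E) 1, ⨅ i, dist (x : E) (v i)) = √(2 - 2 / n) ↔
      ∀ i j, i ≠ j → ⟪v i, v j⟫ = -1 / n := by
  have : Nonempty ι := Fintype.card_pos_iff.1 (by omega)
  have hle := coverHeight_le hdim hcard hv
  have h1 : 1 / (n : ℝ) ≤ 1 :=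
    div_le_one_of_le₀ (by exact_mod_cast one_le_of_finrank_eq hdim hcard hv) (by positivity)
  rw [iSup_iInf_dist_eq_sqrt hv, ← coverHeight_eq_iff hdim hcard hv,
    Real.sqrt_inj (by linarith) (by rw [div_eq_mul_one_div]; linarith), div_eq_mul_one_div]
  constructor <;> intro h <;> linarith

end Simplex

theorem stmt_10 (d : ℕ) (hd : 2 ≤ d) :
    (∀ v : Fin (d+1) → EuclideanSpace ℝ (Fin d), (∀ i, ‖v i‖ = 1) →
      Function.Injective v →
      (Real.sqrt (2 - 2/(d:ℝ)) ≤
        ⨆ x : Metric.sphere (0 : EuclideanSpace ℝ (Fin d)) 1,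
          ⨅ i, dist (x : EuclideanSpace ℝ (Fin d)) (v i)) ∧
      ((⨆ x : Metric.sphere (0 : EuclideanSpace ℝ (Fin d)) 1,
          ⨅ i, dist (x : EuclideanSpace ℝ (Fin d)) (v i)) = Real.sqrt (2 - 2/(d:ℝ)) ↔
        ∀ i j, i ≠ j → (inner ℝ (v i) (v j) : ℝ) = -1/(d:ℝ))) ∧
    (⨅ v : {v : Fin (d+1) → EuclideanSpace ℝ (Fin d) //
        (∀ i, ‖v i‖ = 1) ∧ Function.Injective v},
      ⨆ x : Metric.sphere (0 : EuclideanSpace ℝ (Fin d)) 1,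
        ⨅ i, dist (x : EuclideanSpace ℝ (Fin d)) ((v : Fin (d+1) → EuclideanSpace ℝ (Fin d)) i))
      = Real.sqrt (2 - 2/(d:ℝ)) := by
  have hdim : finrank ℝ (EuclideanSpace ℝ (Fin d)) = d := finrank_euclideanSpace_fin
  have hcard : Fintype.card (Fin (d + 1)) = d + 1 := Fintype.card_fin _
  refine ⟨fun v hv _ => ⟨sqrt_le_iSup_iInf_dist hdim hcard hv, iSup_iInf_dist_eq_iff hdim hcard hv⟩,
    ?_⟩
  obtain ⟨v₀, hv₀, hreg⟩ := exists_regular_simplex hdim hcard (by omega)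
  have hinj : Function.Injective v₀ := fun i j hij => by
    by_contra hne
    have := hreg i j hne
    rw [hij, real_inner_self_eq_norm_sq, hv₀, neg_div] at this
    linarith [show (0 : ℝ) ≤ 1 / d by positivity]
  let Config := {v : Fin (d + 1) → EuclideanSpace ℝ (Fin d) //
    (∀ i, ‖v i‖ = 1) ∧ Function.Injective v}
  have hbound (v : Config) := sqrt_le_iSup_iInf_dist hdim hcard v.2.1
  have : Nonempty Config := ⟨⟨v₀, hv₀, hinj⟩⟩
  refine le_antisymm ?_ (le_ciInf hbound)
  exact (ciInf_le ⟨_, forall_mem_range.2 hbound⟩ ⟨v₀, hv₀, hinj⟩).trans_eq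
    ((iSup_iInf_dist_eq_iff hdim hcard hv₀).2 hreg)
end

section
/- Let d ≥ 2 and f : [0,4] → (-∞,∞] be continuous on (0,4], differentiable on (0,4) with f' concave on (0,4), and lim_{t→0⁺} f(t) = f(0). Let ω* = {x_0,...,x_d} be the vertices of a regular d-simplex inscribed in S^{d-1}. Then for every x ∈ S^{d-1}, ∑_{i=0}^d f(|x - x_i|²) ≥ f(4) + d·f(2 - 2/d), and equality holds at each point of -ω* = {-x_0,...,-x_d}. Consequently min_{x ∈ S^{d-1}} ∑_i f(|x - x_i|²) = f(4) + d·f(2 - 2/d). -/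
/-!
Let `s = 2 - 2/d`. Because `f'` is concave, the quadratic `q` that touches `f` to first order
at `s` and agrees with `f` at `4` stays below `f` on `[0, 4]`: on `(0, 4)` the derivative of
`f - q` is concave with zeros at `s` and at a Rolle point `r ∈ (s, 4)`, so `f - q` decreases,
increases, then decreases back to `0`. On the other hand, for a unit vector `y` the numbers
`u i = ⟪y, x i⟫` satisfy `∑ u i = 0` and `∑ u i ^ 2 = (d + 1) / d` (the simplex is a tight
frame), so `∑ i, q ‖y - x i‖²` takes the same value on the whole sphere; at `y = -x k` the
distances are `4` once and `s` otherwise, so this value is `q 4 + d q s = f 4 + d f s`.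
-/

open Set Finset Filter Topology RealInnerProductSpace

section RegularSimplex

variable {E : Type*} [NormedAddCommGroup E] [InnerProductSpace ℝ E] {d : ℕ}
  {x : Fin (d + 1) → E}

theorem inner_eq_of_regular_simplex (hnorm : ∀ i, ‖x i‖ = 1)
    (hinner : ∀ i j, i ≠ j → ⟪x i, x j⟫ = -1 / (d : ℝ)) (i j : Fin (d + 1)) :
    ⟪x i, x j⟫ = (if i = j then 1 + 1 / (d : ℝ) else 0) - 1 / d := by
  by_cases h : i = j
  · rw [if_pos h, h, real_inner_self_eq_norm_sq, hnorm]; ring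
  · rw [if_neg h, hinner i j h]; ring

theorem sum_eq_zero_of_regular_simplex (hd : d ≠ 0) (hnorm : ∀ i, ‖x i‖ = 1)
    (hinner : ∀ i j, i ≠ j → ⟪x i, x j⟫ = -1 / (d : ℝ)) :
    ∑ i, x i = 0 := by
  rw [← inner_self_eq_zero (𝕜 := ℝ)]
  simp only [sum_inner, inner_sum, inner_eq_of_regular_simplex hnorm hinner, sum_sub_distrib,
    sum_ite_eq', Finset.mem_univ, if_true, sum_const, card_univ, Fintype.card_fin, nsmul_eq_mul]
  push_cast
  field_simp
  ring

theorem linearIndependent_succ_of_regular_simplex (hnorm : ∀ i, ‖x i‖ = 1)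
    (hinner : ∀ i j, i ≠ j → ⟪x i, x j⟫ = -1 / (d : ℝ)) :
    LinearIndependent ℝ (fun i : Fin d => x i.succ) := by
  rw [Fintype.linearIndependent_iff]
  intro c hc j
  -- pairing the relation with each `x k.succ` forces all coefficients to be equal
  have hcoef : ∀ k, (1 + 1 / (d : ℝ)) * c k - (∑ i, c i) / d = 0 := by
    intro k
    have hpair := congrArg (fun v => ⟪x k.succ, v⟫) hc
    simp only [inner_sum, real_inner_smul_right, inner_eq_of_regular_simplex hnorm hinner,
      Fin.succ_inj, mul_sub, mul_ite, mul_zero, sum_sub_distrib, sum_ite_eq, Finset.mem_univ,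
      if_true, inner_zero_right] at hpair
    rw [← hpair, ← sum_mul]; ring
  have hd : (d : ℝ) ≠ 0 := Nat.cast_ne_zero.2 (Fin.pos j).ne'
  have hsum : ∑ i, c i = 0 := by
    have htotal := Finset.sum_eq_zero (s := univ) (fun k _ => hcoef k)
    rw [sum_sub_distrib, ← mul_sum, sum_const, card_univ, Fintype.card_fin, nsmul_eq_mul] at htotal
    field_simp at htotal
    linarith
  have hj := hcoef j
  rw [hsum, zero_div, sub_zero] at hj
  exact (mul_eq_zero.1 hj).resolve_left (by positivity)

theorem sum_inner_smul_of_regular_simplex (hE : Module.finrank ℝ E = d) (hd : d ≠ 0)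
    (hnorm : ∀ i, ‖x i‖ = 1) (hinner : ∀ i j, i ≠ j → ⟪x i, x j⟫ = -1 / (d : ℝ)) (y : E) :
    ∑ i, ⟪x i, y⟫ • x i = ((d + 1) / d : ℝ) • y := by
  have : Nonempty (Fin d) := Fin.pos_iff_nonempty.1 (Nat.pos_of_ne_zero hd)
  have hspan : Submodule.span ℝ (range fun i : Fin d => x i.succ) = ⊤ :=
    (linearIndependent_succ_of_regular_simplex hnorm hinner).span_eq_top_of_card_eq_finrank
      (by rw [Fintype.card_fin, hE])
  have hvertex : ∀ j, ∑ i, ⟪x i, x j⟫ • x i = ((d + 1) / d : ℝ) • x j := by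
    intro j
    simp only [inner_eq_of_regular_simplex hnorm hinner, sub_smul, sum_sub_distrib, ite_smul,
      zero_smul, sum_ite_eq', Finset.mem_univ, if_true, ← smul_sum,
      sum_eq_zero_of_regular_simplex hd hnorm hinner, smul_zero, sub_zero]
    rw [add_div, div_self (Nat.cast_ne_zero.2 hd), add_comm]
  have hlin := LinearMap.ext_on_range hspan
    (f := ∑ i, (innerₛₗ ℝ (x i)).smulRight (x i)) (g := ((d + 1) / d : ℝ) • LinearMap.id)
    (fun j => by simpa using hvertex j.succ)
  simpa using LinearMap.congr_fun hlin y

theorem sum_inner_sq_of_regular_simplex (hE : Module.finrank ℝ E = d) (hd : d ≠ 0)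
    (hnorm : ∀ i, ‖x i‖ = 1) (hinner : ∀ i j, i ≠ j → ⟪x i, x j⟫ = -1 / (d : ℝ)) (y : E) :
    ∑ i, ⟪y, x i⟫ ^ 2 = (d + 1) / d * ‖y‖ ^ 2 := by
  have hframe := congrArg (fun v => ⟪v, y⟫) (sum_inner_smul_of_regular_simplex hE hd hnorm hinner y)
  simp only [sum_inner, real_inner_smul_left, real_inner_self_eq_norm_sq] at hframe
  rw [← hframe]
  exact sum_congr rfl fun i _ => by rw [real_inner_comm, sq]

theorem sum_norm_neg_sub_sq_of_regular_simplex {M : Type*} [AddCommMonoid M] (φ : ℝ → M)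
    (hnorm : ∀ i, ‖x i‖ = 1) (hinner : ∀ i j, i ≠ j → ⟪x i, x j⟫ = -1 / (d : ℝ))
    (k : Fin (d + 1)) :
    ∑ i, φ (‖-x k - x i‖ ^ 2) = φ 4 + d • φ (2 - 2 / d) := by
  have hdist : ∀ i, ‖-x k - x i‖ ^ 2 = 2 + 2 * ⟪x k, x i⟫ := fun i => by
    rw [← neg_add', norm_neg, norm_add_sq_real, hnorm, hnorm]; ring
  have hk : ‖-x k - x k‖ ^ 2 = 4 := by
    rw [hdist, real_inner_self_eq_norm_sq, hnorm]; norm_num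
  have hothers : ∀ i ∈ univ.erase k, ‖-x k - x i‖ ^ 2 = 2 - 2 / d := fun i hi => by
    rw [hdist, hinner k i (ne_of_mem_erase hi).symm]; ring
  rw [← add_sum_erase _ _ (Finset.mem_univ k), hk, sum_congr rfl fun i hi => by rw [hothers i hi],
    sum_const, card_erase_of_mem (Finset.mem_univ k), card_univ, Fintype.card_fin,
    Nat.add_sub_cancel]

theorem sum_quadratic_norm_sub_sq_of_regular_simplex (hE : Module.finrank ℝ E = d)
    (hd : d ≠ 0) (hnorm : ∀ i, ‖x i‖ = 1) (hinner : ∀ i j, i ≠ j → ⟪x i, x j⟫ = -1 / (d : ℝ))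
    {q : ℝ → ℝ} {α β γ : ℝ} (hq : ∀ t, q t = α + β * t + γ * t ^ 2) {y : E} (hy : ‖y‖ = 1) :
    ∑ i, q (‖y - x i‖ ^ 2) = q 4 + d * q (2 - 2 / d) := by
  have hclosed : ∀ z : E, ‖z‖ = 1 →
      ∑ i, q (‖z - x i‖ ^ 2) = (d + 1) * (α + 2 * β + 4 * γ) + 4 * γ * ((d + 1) / d) := by
    intro z hz
    have hlin : ∑ i, ⟪z, x i⟫ = 0 := by
      rw [← inner_sum, sum_eq_zero_of_regular_simplex hd hnorm hinner, inner_zero_right]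
    calc ∑ i, q (‖z - x i‖ ^ 2)
        = ∑ i, ((α + 2 * β + 4 * γ) - (2 * β + 8 * γ) * ⟪z, x i⟫ + 4 * γ * ⟪z, x i⟫ ^ 2) :=
          sum_congr rfl fun i _ => by rw [hq, norm_sub_sq_real, hz, hnorm]; ring
      _ = (d + 1) * (α + 2 * β + 4 * γ) + 4 * γ * ((d + 1) / d) := by
          rw [sum_add_distrib, sum_sub_distrib, ← mul_sum, ← mul_sum, hlin,
            sum_inner_sq_of_regular_simplex hE hd hnorm hinner, hz, sum_const, card_univ,
            Fintype.card_fin, nsmul_eq_mul]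
          push_cast; ring
  rw [hclosed y hy, ← hclosed (-x 0) (by rw [norm_neg, hnorm]),
    sum_norm_neg_sub_sq_of_regular_simplex q hnorm hinner 0, nsmul_eq_mul]

end RegularSimplex

theorem nonneg_of_concave_deriv {G G' : ℝ → ℝ} {a b s : ℝ} (hs : s ∈ Ioo a b)
    (hG : ContinuousOn G (Ioc a b)) (hG' : ∀ t ∈ Ioo a b, HasDerivAt G (G' t) t)
    (hconc : ConcaveOn ℝ (Ioo a b) G') (hGs : G s = 0) (hG's : G' s = 0) (hGb : G b = 0) :
    ∀ t ∈ Ioc a b, 0 ≤ G t := by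
  obtain ⟨r, hr, hG'r⟩ : ∃ r ∈ Ioo s b, G' r = 0 :=
    exists_hasDerivAt_eq_zero hs.2 (hG.mono (Icc_subset_Ioc hs.1 le_rfl)) (hGs.trans hGb.symm)
      fun t ht => hG' t ⟨hs.1.trans ht.1, ht.2⟩
  have hrI : r ∈ Ioo a b := ⟨hs.1.trans hr.1, hr.2⟩
  have hderiv : ∀ {D}, D ⊆ Ioc a b → ∀ t ∈ interior D,
      HasDerivWithinAt G (G' t) (interior D) t := fun hD t ht =>
    (hG' t (by simpa using interior_mono hD ht)).hasDerivWithinAt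
  -- a concave function vanishing at `s < r` is nonpositive off `[s, r]` and nonnegative on it
  have hleft : AntitoneOn G (Ioc a s) := by
    have hD : Ioc a s ⊆ Ioc a b := Ioc_subset_Ioc_right hs.2.le
    refine antitoneOn_of_hasDerivWithinAt_nonpos (convex_Ioc a s) (hG.mono hD) (hderiv hD) ?_
    rw [interior_Ioc]
    exact fun t ht => hG's ▸ hconc.left_le_of_le_right'' ⟨ht.1, ht.2.trans hs.2⟩ hrI ht.2.le
      hr.1 (hG's.trans hG'r.symm).le
  have hmid : MonotoneOn G (Icc s r) := by
    have hD : Icc s r ⊆ Ioc a b := Icc_subset_Ioc hs.1 hr.2.le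
    refine monotoneOn_of_hasDerivWithinAt_nonneg (convex_Icc s r) (hG.mono hD) (hderiv hD) ?_
    rw [interior_Icc]
    intro t ht
    have hmin := hconc.ge_on_segment hs hrI
      (by rw [segment_eq_Icc hr.1.le]; exact Ioo_subset_Icc_self ht)
    rwa [hG's, hG'r, min_self] at hmin
  have hright : AntitoneOn G (Icc r b) := by
    have hD : Icc r b ⊆ Ioc a b := Icc_subset_Ioc hrI.1 le_rfl
    refine antitoneOn_of_hasDerivWithinAt_nonpos (convex_Icc r b) (hG.mono hD) (hderiv hD) ?_
    rw [interior_Icc]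
    exact fun t ht => hG'r ▸ hconc.right_le_of_le_left'' hs ⟨hrI.1.trans ht.1, ht.2⟩ hr.1
      ht.1.le (hG'r.trans hG's.symm).le
  intro t ht
  rcases le_or_gt t s with hts | hst
  · exact hGs ▸ hleft ⟨ht.1, hts⟩ ⟨hs.1, le_rfl⟩ hts
  rcases le_or_gt t r with htr | hrt
  · exact hGs ▸ hmid ⟨le_rfl, hr.1.le⟩ ⟨hst.le, htr⟩ hst.le
  · exact hGb ▸ hright ⟨hrt.le, ht.2⟩ ⟨hr.2.le, le_rfl⟩ ht.2

theorem exists_quadratic_le_of_concave_deriv {F F' : ℝ → ℝ} {a b s : ℝ} (hs : s ∈ Ioo a b)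
    (hF : ContinuousOn F (Ioc a b)) (hF' : ∀ t ∈ Ioo a b, HasDerivAt F (F' t) t)
    (hconc : ConcaveOn ℝ (Ioo a b) F') :
    ∃ α β γ : ℝ, (∀ t ∈ Ioc a b, α + β * t + γ * t ^ 2 ≤ F t) ∧
      α + β * s + γ * s ^ 2 = F s ∧ α + β * b + γ * b ^ 2 = F b := by
  have hbs : b - s ≠ 0 := sub_ne_zero.2 hs.2.ne'
  -- the quadratic touching `F` to first order at `s` and passing through `(b, F b)`
  set γ := (F b - F s - F' s * (b - s)) / (b - s) ^ 2 with hγ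
  set q : ℝ → ℝ := fun t => F s + F' s * (t - s) + γ * (t - s) ^ 2 with hq
  have hqb : q b = F b := by rw [hq, hγ]; field_simp; ring
  have hq' : ∀ t, HasDerivAt q (F' s + 2 * γ * (t - s)) t := fun t => by
    have h := (hasDerivAt_id' t).sub_const s
    exact (((h.const_mul (F' s)).const_add (F s)).fun_add ((h.fun_pow 2).const_mul γ)).congr_deriv
      (by norm_num; ring)
  have hconc' : ConcaveOn ℝ (Ioo a b) fun t => F' t - (F' s + 2 * γ * (t - s)) := by
    refine ((hconc.add ((LinearMap.mulLeft ℝ (-(2 * γ))).concaveOn (convex_Ioo a b))).add_const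
      (2 * γ * s - F' s)).congr fun t _ => ?_
    simp; ring
  have hqF : ∀ t ∈ Ioc a b, q t ≤ F t := fun t ht => sub_nonneg.1 <|
    nonneg_of_concave_deriv hs (hF.sub (by fun_prop)) (fun t ht => (hF' t ht).sub (hq' t))
      hconc' (by simp [hq]) (by simp) (sub_eq_zero.2 hqb.symm) t ht
  refine ⟨F s - F' s * s + γ * s ^ 2, F' s - 2 * γ * s, γ, fun t ht => ?_, by ring, ?_⟩
  · convert hqF t ht using 1; ring
  · rw [← hqb]; ring

theorem EReal.coe_finset_sum {ι : Type*} (s : Finset ι) (g : ι → ℝ) :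
    ((∑ i ∈ s, g i : ℝ) : EReal) = ∑ i ∈ s, (g i : EReal) :=
  map_sum (⟨⟨Real.toEReal, EReal.coe_zero⟩, EReal.coe_add⟩ : ℝ →+ EReal) g s

theorem EReal.exists_quadratic_le_of_concave_deriv {f : ℝ → EReal} {f' : ℝ → ℝ} {a b s : ℝ}
    (hs : s ∈ Ioo a b) (hne_bot : ∀ t ∈ Ioc a b, f t ≠ ⊥) (hfin : ∀ t ∈ Ioc a b, f t ≠ ⊤)
    (hcont : ContinuousOn f (Ioc a b))
    (hderiv : ∀ t ∈ Ioo a b, HasDerivAt (fun t => (f t).toReal) (f' t) t)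
    (hconc : ConcaveOn ℝ (Ioo a b) f') (hlim : Tendsto f (𝓝[>] a) (𝓝 (f a))) :
    ∃ α β γ : ℝ, (∀ t ∈ Icc a b, ((α + β * t + γ * t ^ 2 : ℝ) : EReal) ≤ f t) ∧
      ((α + β * s + γ * s ^ 2 : ℝ) : EReal) = f s ∧
      ((α + β * b + γ * b ^ 2 : ℝ) : EReal) = f b := by
  have hfF : ∀ t ∈ Ioc a b, ((f t).toReal : EReal) = f t := fun t ht =>
    EReal.coe_toReal (hfin t ht) (hne_bot t ht)
  obtain ⟨α, β, γ, hle, hs_eq, hb_eq⟩ :=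
    _root_.exists_quadratic_le_of_concave_deriv (F := fun t => (f t).toReal) hs
    (EReal.continuousOn_toReal.comp hcont fun t ht => by simp [hfin t ht, hne_bot t ht])
    hderiv hconc
  have hle' : ∀ t ∈ Ioc a b, ((α + β * t + γ * t ^ 2 : ℝ) : EReal) ≤ f t := fun t ht =>
    hfF t ht ▸ EReal.coe_le_coe_iff.2 (hle t ht)
  refine ⟨α, β, γ, fun t ht => ?_, by rw [hs_eq, hfF s (Ioo_subset_Ioc_self hs)],
    by rw [hb_eq, hfF b ⟨hs.1.trans hs.2, le_rfl⟩]⟩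
  rcases ht.1.eq_or_lt with rfl | hat
  · have hq : Continuous fun t => ((α + β * t + γ * t ^ 2 : ℝ) : EReal) :=
      continuous_coe_real_ereal.comp (by fun_prop)
    exact le_of_tendsto_of_tendsto (hq.tendsto a |>.mono_left nhdsWithin_le_nhds) hlim
      (eventually_of_mem (Ioc_mem_nhdsGT (hs.1.trans hs.2)) hle')
  · exact hle' t ⟨hat, ht.2⟩

theorem norm_sub_sq_mem_Icc {E : Type*} [SeminormedAddCommGroup E] {y z : E} (hy : ‖y‖ = 1)
    (hz : ‖z‖ = 1) : ‖y - z‖ ^ 2 ∈ Icc (0 : ℝ) 4 :=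
  ⟨by positivity, by nlinarith [norm_sub_le y z, norm_nonneg (y - z)]⟩

theorem stmt_11 (d : ℕ) (hd : 2 ≤ d) (f : ℝ → EReal) (f' : ℝ → ℝ)
    (hne_bot : ∀ t ∈ Set.Icc (0:ℝ) 4, f t ≠ ⊥)
    (hfin : ∀ t ∈ Set.Ioc (0:ℝ) 4, f t ≠ ⊤)
    (hcont : ContinuousOn f (Set.Ioc (0:ℝ) 4))
    (hderiv : ∀ t ∈ Set.Ioo (0:ℝ) 4, HasDerivAt (fun s => (f s).toReal) (f' t) t)
    (hconc : ConcaveOn ℝ (Set.Ioo (0:ℝ) 4) f')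
    (hlim : Filter.Tendsto f (nhdsWithin 0 (Set.Ioi 0)) (nhds (f 0)))
    (x : Fin (d+1) → EuclideanSpace ℝ (Fin d))
    (hnorm : ∀ i, ‖x i‖ = 1)
    (hinner : ∀ i j, i ≠ j → (inner ℝ (x i) (x j) : ℝ) = -1/(d:ℝ)) :
    (∀ y : EuclideanSpace ℝ (Fin d), ‖y‖ = 1 →
      f 4 + ((d:ℝ) : EReal) * f (2 - 2/(d:ℝ)) ≤ ∑ i, f (‖y - x i‖^2)) ∧
    (∀ k, ∑ i, f (‖(-(x k)) - x i‖^2) = f 4 + ((d:ℝ) : EReal) * f (2 - 2/(d:ℝ))) ∧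
    (⨅ y : Metric.sphere (0 : EuclideanSpace ℝ (Fin d)) 1,
        ∑ i, f (‖(y : EuclideanSpace ℝ (Fin d)) - x i‖^2))
      = f 4 + ((d:ℝ) : EReal) * f (2 - 2/(d:ℝ)) := by
  have hd0 : d ≠ 0 := by omega
  have hs : 2 - 2 / (d : ℝ) ∈ Ioo (0 : ℝ) 4 := by
    have : 2 / (d : ℝ) ≤ 1 := by rw [div_le_one (by positivity)]; exact_mod_cast hd
    exact ⟨by linarith, by linarith [show 0 < 2 / (d : ℝ) by positivity]⟩
  obtain ⟨α, β, γ, hle, hs_eq, h4_eq⟩ := EReal.exists_quadratic_le_of_concave_deriv hs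
    (fun t ht => hne_bot t (Ioc_subset_Icc_self ht)) hfin hcont hderiv hconc hlim
  have hlower : ∀ y : EuclideanSpace ℝ (Fin d), ‖y‖ = 1 →
      f 4 + ((d : ℝ) : EReal) * f (2 - 2 / d) ≤ ∑ i, f (‖y - x i‖ ^ 2) := fun y hy =>
    calc f 4 + ((d : ℝ) : EReal) * f (2 - 2 / d)
        = ((∑ i, (α + β * ‖y - x i‖ ^ 2 + γ * (‖y - x i‖ ^ 2) ^ 2) : ℝ) : EReal) := by
          rw [sum_quadratic_norm_sub_sq_of_regular_simplex finrank_euclideanSpace_fin hd0 hnorm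
            hinner (fun t => rfl) hy, ← h4_eq, ← hs_eq]
          norm_cast
      _ ≤ ∑ i, f (‖y - x i‖ ^ 2) := by
          rw [EReal.coe_finset_sum]
          exact sum_le_sum fun i _ => hle _ (norm_sub_sq_mem_Icc hy (hnorm i))
  have hequal : ∀ k, ∑ i, f (‖-x k - x i‖ ^ 2) = f 4 + ((d : ℝ) : EReal) * f (2 - 2 / d) :=
    fun k => by
      rw [sum_norm_neg_sub_sq_of_regular_simplex f hnorm hinner k, EReal.nsmul_eq_mul,
        EReal.coe_natCast]
  refine ⟨hlower, hequal,
    le_antisymm ?_ (le_iInf fun y => hlower y (mem_sphere_zero_iff_norm.1 y.2))⟩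
  exact iInf_le_of_le ⟨-x 0, by rw [mem_sphere_zero_iff_norm, norm_neg, hnorm]⟩ (hequal 0).le
end

section
/- Let d ≥ 2 and f : [0,4] → (-∞,∞) be continuous on (0,4], finite at 0 with lim_{t→0⁺} f(t) = f(0), differentiable on (0,4) with f' concave on (0,4). Let ω* = {x_0,...,x_d} be the vertices of a regular d-simplex inscribed in S^{d-1}. Then max_{x ∈ S^{d-1}} ∑_{i=0}^d f(|x - x_i|²) = f(0) + d·f(2 + 2/d), and the maximum is achieved at every point of ω*. -/
/-!
Concavity of `f'` puts `f` below the quadratic `q` that agrees with `f` at `0` and at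
`τ = 2 + 2/d` and has the same slope as `f` at `τ`. The vertices of a regular simplex form a
spherical 2-design: `∑ ⟪x i, y⟫ = 0` and `∑ ⟪x i, y⟫ ^ 2 = (1 + 1/d) ‖y‖ ^ 2`, and since
`‖y - x i‖ ^ 2 = 2 - 2 ⟪x i, y⟫` on the sphere, `∑ q (‖y - x i‖ ^ 2)` is the same for every unit
vector `y`. Evaluating it at a vertex gives `q 0 + d q τ = f 0 + d f τ`.
-/

open Set Finset RealInnerProductSpace

theorem ContinuousOn.Icc_of_Ioc {f : ℝ → ℝ} {a b : ℝ} (hab : a ≤ b)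
    (hf : ContinuousOn f (Ioc a b)) (ha : ContinuousWithinAt f (Ioi a) a) :
    ContinuousOn f (Icc a b) := by
  rw [← Ioc_insert_left hab]
  rintro t (rfl | ht) <;> rw [continuousWithinAt_insert]
  · exact ha.mono Ioc_subset_Ioi_self
  · exact hf t ht

theorem antitoneOn_Icc_of_hasDerivAt_nonpos_s12 {h h' : ℝ → ℝ} {a b : ℝ}
    (hcont : ContinuousOn h (Icc a b)) (hderiv : ∀ t ∈ Ioo a b, HasDerivAt h (h' t) t)
    (hneg : ∀ t ∈ Ioo a b, h' t ≤ 0) : AntitoneOn h (Icc a b) :=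
  antitoneOn_of_hasDerivWithinAt_nonpos (convex_Icc a b) hcont
    (fun t ht ↦ (hderiv t (by rwa [interior_Icc] at ht)).hasDerivWithinAt)
    (fun t ht ↦ hneg t (by rwa [interior_Icc] at ht))

theorem monotoneOn_Icc_of_hasDerivAt_nonneg_s12 {h h' : ℝ → ℝ} {a b : ℝ}
    (hcont : ContinuousOn h (Icc a b)) (hderiv : ∀ t ∈ Ioo a b, HasDerivAt h (h' t) t)
    (hpos : ∀ t ∈ Ioo a b, 0 ≤ h' t) : MonotoneOn h (Icc a b) :=
  monotoneOn_of_hasDerivWithinAt_nonneg (convex_Icc a b) hcont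
    (fun t ht ↦ (hderiv t (by rwa [interior_Icc] at ht)).hasDerivWithinAt)
    (fun t ht ↦ hpos t (by rwa [interior_Icc] at ht))

-- Rolle gives a second zero `ξ < τ` of the concave `h'`, so `h' ≤ 0` on `(a, ξ)` and `(τ, b)`
-- and `h' ≥ 0` on `(ξ, τ)`: `h` falls from `h a = h τ`, rises back to `h τ`, then falls again.
theorem isMaxOn_of_concaveOn_deriv {h h' : ℝ → ℝ} {a b τ : ℝ} (hτ : τ ∈ Ioo a b)
    (hcont : ContinuousOn h (Icc a b)) (hderiv : ∀ t ∈ Ioo a b, HasDerivAt h (h' t) t)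
    (hconc : ConcaveOn ℝ (Ioo a b) h') (haτ : h a = h τ) (hτ' : h' τ = 0) :
    IsMaxOn h (Icc a b) τ := by
  obtain ⟨haτ', hτb⟩ := hτ
  obtain ⟨ξ, ⟨haξ, hξτ⟩, hξ'⟩ := exists_hasDerivAt_eq_zero haτ'
    (hcont.mono (Icc_subset_Icc_right hτb.le)) haτ
    (fun t ht ↦ hderiv t ⟨ht.1, ht.2.trans hτb⟩)
  have hξ : ξ ∈ Ioo a b := ⟨haξ, hξτ.trans hτb⟩
  have hτ : τ ∈ Ioo a b := ⟨haτ', hτb⟩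
  have hcont' : ∀ {p q}, a ≤ p → q ≤ b → ContinuousOn h (Icc p q) :=
    fun hp hq ↦ hcont.mono (Icc_subset_Icc hp hq)
  have hderiv' : ∀ {p q}, a ≤ p → q ≤ b → ∀ t ∈ Ioo p q, HasDerivAt h (h' t) t :=
    fun hp hq t ht ↦ hderiv t ⟨hp.trans_lt ht.1, ht.2.trans_le hq⟩
  have hdecr₁ : AntitoneOn h (Icc a ξ) :=
    antitoneOn_Icc_of_hasDerivAt_nonpos_s12 (hcont' le_rfl hξ.2.le) (hderiv' le_rfl hξ.2.le)
      fun t ht ↦ hξ' ▸ hconc.left_le_of_le_right'' ⟨ht.1, ht.2.trans hξ.2⟩ hτ ht.2.le hξτ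
        (by rw [hξ', hτ'])
  have hincr : MonotoneOn h (Icc ξ τ) :=
    monotoneOn_Icc_of_hasDerivAt_nonneg_s12 (hcont' haξ.le hτb.le) (hderiv' haξ.le hτb.le)
      fun t ht ↦ by
        simpa [hξ', hτ'] using hconc.ge_on_segment hξ hτ
          (segment_eq_Icc hξτ.le ▸ Ioo_subset_Icc_self ht)
  have hdecr₂ : AntitoneOn h (Icc τ b) :=
    antitoneOn_Icc_of_hasDerivAt_nonpos_s12 (hcont' haτ'.le le_rfl) (hderiv' haτ'.le le_rfl)
      fun t ht ↦ hτ' ▸ hconc.right_le_of_le_left'' hξ ⟨haτ'.trans ht.1, ht.2⟩ hξτ ht.1.le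
        (by rw [hξ', hτ'])
  refine isMaxOn_iff.2 fun t ⟨hat, htb⟩ ↦ ?_
  rcases le_total t ξ with htξ | hξt
  · exact haτ ▸ hdecr₁ ⟨le_rfl, haξ.le⟩ ⟨hat, htξ⟩ hat
  rcases le_total t τ with htτ | hτt
  · exact hincr ⟨hξt, htτ⟩ ⟨hξτ.le, le_rfl⟩ htτ
  · exact hdecr₂ ⟨le_rfl, hτb.le⟩ ⟨hτt, htb⟩ hτt

theorem exists_quadratic_ge_of_concaveOn_deriv {f f' : ℝ → ℝ} {a b τ : ℝ} (hτ : τ ∈ Ioo a b)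
    (hcont : ContinuousOn f (Icc a b)) (hderiv : ∀ t ∈ Ioo a b, HasDerivAt f (f' t) t)
    (hconc : ConcaveOn ℝ (Ioo a b) f') :
    ∃ c₀ c₁ c₂ : ℝ, c₀ + c₁ * a + c₂ * a ^ 2 = f a ∧ c₀ + c₁ * τ + c₂ * τ ^ 2 = f τ ∧
      ∀ t ∈ Icc a b, f t ≤ c₀ + c₁ * t + c₂ * t ^ 2 := by
  have hτa : τ - a ≠ 0 := sub_ne_zero.2 hτ.1.ne'
  -- the quadratic matching `f` at `a` and `τ`, and `f'` at `τ`
  set β := (f' τ * (τ - a) - (f τ - f a)) / (τ - a) ^ 2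
  set α := f' τ - 2 * β * (τ - a)
  set c₀ := f a - α * a + β * a ^ 2
  set c₁ := α - 2 * β * a
  have hqa : c₀ + c₁ * a + β * a ^ 2 = f a := by ring
  have hqτ : c₀ + c₁ * τ + β * τ ^ 2 = f τ := by
    simp only [c₀, c₁, α, β]; field_simp; ring
  refine ⟨c₀, c₁, β, hqa, hqτ, fun t ht ↦ ?_⟩
  have hq' : ∀ t, HasDerivAt (fun t ↦ c₀ + c₁ * t + β * t ^ 2) (c₁ + 2 * β * t) t := fun t ↦ by
    refine ((((hasDerivAt_id t).const_mul c₁).const_add c₀).add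
      ((hasDerivAt_pow 2 t).const_mul β)).congr_deriv ?_
    simp only [Nat.cast_ofNat]; ring
  have hconc' : ConcaveOn ℝ (Ioo a b) (fun t ↦ f' t - (c₁ + 2 * β * t)) := by
    refine ⟨hconc.1, fun x hx y hy p q hp hq hpq ↦ ?_⟩
    have := hconc.2 hx hy hp hq hpq
    simp only [smul_eq_mul] at *
    linear_combination this - c₁ * hpq
  have := isMaxOn_iff.1 (isMaxOn_of_concaveOn_deriv hτ (hcont.sub (by fun_prop))
    (fun t ht ↦ (hderiv t ht).sub (hq' t)) hconc' (by simp only [Pi.sub_apply, hqa, hqτ, sub_self])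
    (by simp only [c₁, α]; ring)) t ht
  simpa only [Pi.sub_apply, hqτ, sub_self, sub_nonpos] using this

theorem Fin.sum_eq_add_nsmul_of_ne {M : Type*} [AddCommMonoid M] {n : ℕ} {g : Fin (n + 1) → M}
    (k : Fin (n + 1)) {c : M} (hg : ∀ i, i ≠ k → g i = c) : ∑ i, g i = g k + n • c := by
  rw [← add_sum_erase _ _ (mem_univ k), sum_congr rfl fun i hi ↦ hg i (ne_of_mem_erase hi),
    Finset.sum_const, card_erase_of_mem (mem_univ k), card_univ, Fintype.card_fin,
    Nat.add_sub_cancel]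

section RegularSimplex

variable {E : Type*} [NormedAddCommGroup E] [InnerProductSpace ℝ E] {n : ℕ}

structure IsRegularSimplex (x : Fin (n + 1) → E) : Prop where
  norm_eq_one : ∀ i, ‖x i‖ = 1
  inner_eq : ∀ i j, i ≠ j → ⟪x i, x j⟫ = -1 / n

namespace IsRegularSimplex

variable {x : Fin (n + 1) → E}

theorem inner_self (hx : IsRegularSimplex x) (i : Fin (n + 1)) : ⟪x i, x i⟫ = 1 := by
  rw [real_inner_self_eq_norm_sq, hx.norm_eq_one, one_pow]

theorem sum_eq_zero (hx : IsRegularSimplex x) (hn : n ≠ 0) : ∑ i, x i = 0 := by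
  have hrow : ∀ i, ⟪x i, ∑ j, x j⟫ = 0 := fun i ↦ by
    rw [inner_sum, Fin.sum_eq_add_nsmul_of_ne i fun j hj ↦ hx.inner_eq i j (Ne.symm hj),
      hx.inner_self, nsmul_eq_mul]
    field_simp
    ring
  rw [← inner_self_eq_zero (𝕜 := ℝ), sum_inner]
  exact Finset.sum_eq_zero fun i _ ↦ hrow i

theorem norm_sub_sq (hx : IsRegularSimplex x) {i j : Fin (n + 1)} (hij : i ≠ j) :
    ‖x i - x j‖ ^ 2 = 2 + 2 / n := by
  rw [norm_sub_sq_real, hx.norm_eq_one, hx.norm_eq_one, hx.inner_eq i j hij]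
  ring

theorem sum_comp_norm_sub_sq (hx : IsRegularSimplex x) (g : ℝ → ℝ) (k : Fin (n + 1)) :
    ∑ i, g (‖x k - x i‖ ^ 2) = g 0 + n * g (2 + 2 / n) := by
  rw [Fin.sum_eq_add_nsmul_of_ne k fun i hi ↦ by rw [hx.norm_sub_sq (Ne.symm hi)],
    sub_self, norm_zero, nsmul_eq_mul]
  norm_num

theorem linearIndependent_comp_castSucc (hx : IsRegularSimplex x) :
    LinearIndependent ℝ (x ∘ Fin.castSucc) := by
  rw [Fintype.linearIndependent_iff]
  intro g hg j
  -- `x (last n)` cancels the off-diagonal part of the Gram matrix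
  have key : ⟪∑ i, g i • x i.castSucc, x j.castSucc - x (Fin.last n)⟫ = g j * (1 + 1 / n) := by
    rw [sum_inner, sum_eq_single j, real_inner_smul_left, inner_sub_right, hx.inner_self,
      hx.inner_eq _ _ (Fin.castSucc_ne_last j)]
    · ring
    · intro i _ hij
      rw [real_inner_smul_left, inner_sub_right, hx.inner_eq _ _ (Fin.castSucc_ne_last i),
        hx.inner_eq _ _ (Fin.castSucc_injective n |>.ne hij), sub_self, mul_zero]
    · simp
  rw [Function.comp_def] at hg
  rw [hg, inner_zero_left] at key
  have : (0 : ℝ) < 1 + 1 / n := by positivity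
  nlinarith

theorem span_range_eq_top (hx : IsRegularSimplex x) (hn : n ≠ 0)
    (hE : Module.finrank ℝ E = n) : Submodule.span ℝ (Set.range x) = ⊤ := by
  have : Nonempty (Fin n) := Fin.pos_iff_nonempty.1 (Nat.pos_of_ne_zero hn)
  refine eq_top_mono (Submodule.span_mono (Set.range_comp_subset_range Fin.castSucc x)) ?_
  exact hx.linearIndependent_comp_castSucc.span_eq_top_of_card_eq_finrank
    (by rw [Fintype.card_fin, hE])

theorem sum_inner_smul (hx : IsRegularSimplex x) (hn : n ≠ 0) (hE : Module.finrank ℝ E = n)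
    (y : E) : ∑ i, ⟪x i, y⟫ • x i = (1 + 1 / n : ℝ) • y := by
  let frame : E →ₗ[ℝ] E := ∑ i, (innerₛₗ ℝ (x i)).smulRight (x i)
  suffices frame = (1 + 1 / n : ℝ) • LinearMap.id by
    simpa [frame] using LinearMap.congr_fun this y
  refine LinearMap.ext_on_range (hx.span_range_eq_top hn hE) fun k ↦ ?_
  have hsum : ∑ i, (⟪x i, x k⟫ + 1 / n) • x i = (1 + 1 / n : ℝ) • x k := by
    rw [sum_eq_single k, hx.inner_self]
    · intro i _ hik
      rw [hx.inner_eq i k hik, neg_div, neg_add_cancel, zero_smul]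
    · simp
  simpa [frame, add_smul, sum_add_distrib, ← smul_sum, hx.sum_eq_zero hn] using hsum

theorem sum_inner_sq (hx : IsRegularSimplex x) (hn : n ≠ 0) (hE : Module.finrank ℝ E = n)
    (y : E) : ∑ i, ⟪x i, y⟫ ^ 2 = (1 + 1 / n) * ‖y‖ ^ 2 := by
  have := congr_arg (⟪·, y⟫) (hx.sum_inner_smul hn hE y)
  simpa [sum_inner, real_inner_smul_left, real_inner_self_eq_norm_sq, sq] using this

theorem sum_quadratic_norm_sub_sq (hx : IsRegularSimplex x) (hn : n ≠ 0)
    (hE : Module.finrank ℝ E = n) (c₀ c₁ c₂ : ℝ) {y z : E} (hy : ‖y‖ = 1) (hz : ‖z‖ = 1) :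
    ∑ i, (c₀ + c₁ * ‖y - x i‖ ^ 2 + c₂ * (‖y - x i‖ ^ 2) ^ 2) =
      ∑ i, (c₀ + c₁ * ‖z - x i‖ ^ 2 + c₂ * (‖z - x i‖ ^ 2) ^ 2) := by
  suffices ∀ y : E, ‖y‖ = 1 → ∑ i, (c₀ + c₁ * ‖y - x i‖ ^ 2 + c₂ * (‖y - x i‖ ^ 2) ^ 2) =
      (n + 1) * (c₀ + 2 * c₁ + 4 * c₂) + 4 * c₂ * (1 + 1 / n) by
    rw [this y hy, this z hz]
  intro y hy
  have hlin : ∑ i, ⟪x i, y⟫ = 0 := by rw [← sum_inner, hx.sum_eq_zero hn, inner_zero_left]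
  have hquad := hx.sum_inner_sq hn hE y
  rw [hy, one_pow, mul_one] at hquad
  have hdist : ∀ i, ‖y - x i‖ ^ 2 = 2 - 2 * ⟪x i, y⟫ := fun i ↦ by
    rw [norm_sub_sq_real, hy, hx.norm_eq_one, real_inner_comm]; ring
  calc _ = ∑ i, ((c₀ + 2 * c₁ + 4 * c₂) - (2 * c₁ + 8 * c₂) * ⟪x i, y⟫ + 4 * c₂ * ⟪x i, y⟫ ^ 2) :=
        sum_congr rfl fun i _ ↦ by rw [hdist]; ring
    _ = _ := by
      rw [sum_add_distrib, sum_sub_distrib, ← mul_sum, ← mul_sum, hlin, hquad, Finset.sum_const,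
        card_univ, Fintype.card_fin, nsmul_eq_mul]
      push_cast
      ring

end IsRegularSimplex

end RegularSimplex

theorem stmt_12 (d : ℕ) (hd : 2 ≤ d) (f : ℝ → ℝ) (f' : ℝ → ℝ)
    (hcont : ContinuousOn f (Set.Ioc (0:ℝ) 4))
    (hlim : Filter.Tendsto f (nhdsWithin 0 (Set.Ioi 0)) (nhds (f 0)))
    (hderiv : ∀ t ∈ Set.Ioo (0:ℝ) 4, HasDerivAt f (f' t) t)
    (hconc : ConcaveOn ℝ (Set.Ioo (0:ℝ) 4) f')
    (x : Fin (d+1) → EuclideanSpace ℝ (Fin d))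
    (hnorm : ∀ i, ‖x i‖ = 1)
    (hinner : ∀ i j, i ≠ j → (inner ℝ (x i) (x j) : ℝ) = -1/(d:ℝ)) :
    (∀ y : EuclideanSpace ℝ (Fin d), ‖y‖ = 1 →
      ∑ i, f (‖y - x i‖^2) ≤ f 0 + (d:ℝ) * f (2 + 2/(d:ℝ))) ∧
    (∀ k, ∑ i, f (‖x k - x i‖^2) = f 0 + (d:ℝ) * f (2 + 2/(d:ℝ))) := by
  have hx : IsRegularSimplex x := ⟨hnorm, hinner⟩
  refine ⟨fun y hy ↦ ?_, hx.sum_comp_norm_sub_sq f⟩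
  have hd0 : d ≠ 0 := by omega
  have hτ : 2 + 2 / (d : ℝ) ∈ Set.Ioo 0 4 := by
    have : (2 : ℝ) ≤ d := by exact_mod_cast hd
    constructor
    · positivity
    · linarith [(div_le_one (by positivity : (0 : ℝ) < d)).2 this]
  obtain ⟨c₀, c₁, c₂, hq₀, hqτ, hfq⟩ := exists_quadratic_ge_of_concaveOn_deriv hτ
    ((hcont.Icc_of_Ioc zero_le_four) hlim) hderiv hconc
  have hdist : ∀ i, ‖y - x i‖ ^ 2 ∈ Set.Icc (0 : ℝ) 4 := fun i ↦
    ⟨by positivity, by nlinarith [norm_sub_le y (x i), hnorm i, norm_nonneg (y - x i)]⟩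
  calc ∑ i, f (‖y - x i‖ ^ 2)
      ≤ ∑ i, (c₀ + c₁ * ‖y - x i‖ ^ 2 + c₂ * (‖y - x i‖ ^ 2) ^ 2) :=
        Finset.sum_le_sum fun i _ ↦ hfq _ (hdist i)
    _ = ∑ i, (c₀ + c₁ * ‖x 0 - x i‖ ^ 2 + c₂ * (‖x 0 - x i‖ ^ 2) ^ 2) :=
        hx.sum_quadratic_norm_sub_sq hd0 finrank_euclideanSpace_fin c₀ c₁ c₂ hy (hnorm 0)
    _ = f 0 + d * f (2 + 2 / d) := by
        rw [hx.sum_comp_norm_sub_sq (fun t ↦ c₀ + c₁ * t + c₂ * t ^ 2), ← hq₀, hqτ]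
end

section
/- Let d ≥ 2 and f : [0,4] → (-∞,∞] be finite, non-increasing, and convex on (0,4] with lim_{t→0⁺} f(t) = f(0). Let ω = {v_0,...,v_d} ⊂ S^{d-1} be a configuration such that the origin is not in the interior of the convex hull of ω. Then min_{x ∈ S^{d-1}} ∑_{i=0}^d f(|x - v_i|²) ≤ min{ f(4) + d·f(2 - 2/d), f(0) + d·f(2 + 2/d) }. If f is strictly convex on (0,4], the inequality is strict. -/
/-!
Since `0` is not an interior point of the convex hull of `ω`, a supporting hyperplane gives a unit
vector `y` with `⟪y, vᵢ⟫ ≤ 0` for all `i`; then `‖y - vᵢ‖² ∈ [2, 4]`, so by monotonicity the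
potential at `y` is at most `(d + 1) f(2)`. As `2` is the `(1, d)`-weighted mean of `4` and
`2 - 2/d`, and also of `0` and `2 + 2/d`, Jensen's inequality bounds `(d + 1) f(2)` by both
quantities, strictly when `f` is strictly convex. At the endpoint `0`, where `f` is only known
through its right limit, the chord inequality is obtained by letting the left point of the chord
tend to `0`; strictness survives by first passing through an intermediate point.
-/

open Filter Topology Set RealInnerProductSpace

section Sphere

variable {E : Type*} [NormedAddCommGroup E] [InnerProductSpace ℝ E] [FiniteDimensional ℝ E]

theorem exists_ne_zero_forall_inner_eq_of_affineSpan_ne_top {s : Set E} (hs : s.Nonempty)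
    (hspan : affineSpan ℝ s ≠ ⊤) : ∃ a ≠ 0, ∃ c : ℝ, ∀ x ∈ s, ⟪a, x⟫ = c := by
  obtain ⟨x₀, hx₀⟩ := hs
  have hdir : (affineSpan ℝ s).direction ≠ ⊤ := fun h => hspan <|
    (AffineSubspace.direction_eq_top_iff_of_nonempty
      ((affineSpan_nonempty (k := ℝ)).mpr ⟨x₀, hx₀⟩)).mp h
  obtain ⟨a, ha, ha0⟩ := Submodule.exists_mem_ne_zero_of_ne_bot
    (fun h => hdir (Submodule.orthogonal_eq_bot_iff.mp h))
  refine ⟨a, ha0, ⟪a, x₀⟫, fun x hx => ?_⟩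
  have hmem : x - x₀ ∈ (affineSpan ℝ s).direction := AffineSubspace.vsub_mem_direction
    (subset_affineSpan ℝ _ hx) (subset_affineSpan ℝ _ hx₀)
  have h0 : ⟪a, x - x₀⟫ = 0 := real_inner_comm a _ ▸ (Submodule.mem_orthogonal _ a).mp ha _ hmem
  rwa [inner_sub_right, sub_eq_zero] at h0

theorem exists_ne_zero_forall_inner_nonpos_of_zero_notMem_interior_convexHull {s : Set E}
    (hs : s.Nonempty) (h0 : (0 : E) ∉ interior (convexHull ℝ s)) :
    ∃ a ≠ 0, ∀ x ∈ s, ⟪a, x⟫ ≤ 0 := by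
  by_cases hint : (interior (convexHull ℝ s)).Nonempty
  · obtain ⟨g, hg0, hg⟩ :=
      geometric_hahn_banach_of_nonempty_interior_point (convex_convexHull ℝ s) h0 hint
    refine ⟨(InnerProductSpace.toDual ℝ E).symm g, by simpa using hg0, fun x hx => ?_⟩
    simpa using hg x (subset_convexHull ℝ s hx)
  · rw [interior_convexHull_nonempty_iff_affineSpan_eq_top] at hint
    obtain ⟨a, ha0, c, hc⟩ := exists_ne_zero_forall_inner_eq_of_affineSpan_ne_top hs hint
    rcases le_or_gt c 0 with hc0 | hc0
    · exact ⟨a, ha0, fun x hx => hc x hx ▸ hc0⟩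
    · exact ⟨-a, neg_ne_zero.mpr ha0, fun x hx => by rw [inner_neg_left, hc x hx]; linarith⟩

theorem exists_norm_eq_one_forall_inner_nonpos_of_zero_notMem_interior_convexHull {s : Set E}
    (hs : s.Nonempty) (h0 : (0 : E) ∉ interior (convexHull ℝ s)) :
    ∃ y : E, ‖y‖ = 1 ∧ ∀ x ∈ s, ⟪y, x⟫ ≤ 0 := by
  obtain ⟨a, ha0, ha⟩ := exists_ne_zero_forall_inner_nonpos_of_zero_notMem_interior_convexHull hs h0
  refine ⟨‖a‖⁻¹ • a, by simp [norm_smul, ha0], fun x hx => ?_⟩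
  rw [real_inner_smul_left]
  exact mul_nonpos_of_nonneg_of_nonpos (by positivity) (ha x hx)

theorem iInf_sphere_sum_le_card_nsmul {ι : Type*} [Fintype ι] [Nonempty ι] {f : ℝ → EReal}
    (hf : AntitoneOn f (Icc 2 4)) {v : ι → E} (hv : ∀ i, ‖v i‖ = 1)
    (h0 : (0 : E) ∉ interior (convexHull ℝ (range v))) :
    ⨅ x : Metric.sphere (0 : E) 1, ∑ i, f (‖(x : E) - v i‖ ^ 2) ≤ Fintype.card ι • f 2 := by
  obtain ⟨y, hy, hyv⟩ :=
    exists_norm_eq_one_forall_inner_nonpos_of_zero_notMem_interior_convexHull (range_nonempty v) h0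
  have hdist : ∀ i, ‖y - v i‖ ^ 2 ∈ Icc 2 4 := by
    intro i
    have hyvi := hyv (v i) (mem_range_self i)
    have hle : ‖y - v i‖ ≤ 2 := (norm_sub_le y (v i)).trans_eq (by rw [hy, hv]; norm_num)
    constructor
    · rw [norm_sub_sq_real, hy, hv]; linarith
    · nlinarith [norm_nonneg (y - v i)]
  calc ⨅ x : Metric.sphere (0 : E) 1, ∑ i, f (‖(x : E) - v i‖ ^ 2)
      ≤ ∑ i, f (‖y - v i‖ ^ 2) := iInf_le_of_le ⟨y, by simpa using hy⟩ le_rfl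
    _ ≤ ∑ _i : ι, f 2 := Finset.sum_le_sum fun i _ =>
        hf ⟨le_rfl, by norm_num⟩ (hdist i) (hdist i).1
    _ = Fintype.card ι • f 2 := by simp

end Sphere

section ConvexExtension

variable {g : ℝ → ℝ} {s : Set ℝ} {a b L x y θ n : ℝ}

theorem ConvexOn.le_of_tendsto_nhdsGT (hg : ConvexOn ℝ (Ioc a b) g)
    (hL : Tendsto g (𝓝[>] a) (𝓝 L)) (hy : y ∈ Ioc a b) (hθ₀ : 0 ≤ θ) (hθ₁ : θ < 1) :
    g (θ * a + (1 - θ) * y) ≤ θ * L + (1 - θ) * g y := by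
  set p := θ * a + (1 - θ) * y
  have hya : 0 < y - a := sub_pos.mpr hy.1
  have hap : a < p := by
    have : 0 < (1 - θ) * (y - a) := mul_pos (by linarith) hya
    linarith
  have hpy : p ≤ y := by nlinarith
  -- `p` is the combination of `s` and `y` with weight `(y - p) / (y - s)` on `s`
  set μ : ℝ → ℝ := fun s => (y - p) / (y - s)
  have hchord : ∀ᶠ s in 𝓝[>] a, g p ≤ μ s * g s + (1 - μ s) * g y := by
    filter_upwards [Ioo_mem_nhdsGT hap] with s hs
    have hys : 0 < y - s := by linarith [hs.2]
    have hμ₀ : 0 ≤ μ s := div_nonneg (by linarith) hys.le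
    have hμ₁ : 0 ≤ 1 - μ s := by
      rw [sub_nonneg, div_le_one hys]; linarith [hs.2]
    have hcomb : μ s * s + (1 - μ s) * y = p := by
      simp only [μ]; field_simp; ring
    simpa [smul_eq_mul, hcomb] using
      hg.2 ⟨hs.1, by linarith [hs.2, hy.2]⟩ hy hμ₀ hμ₁ (add_sub_cancel _ _)
  have hμ : Tendsto μ (𝓝[>] a) (𝓝 θ) := by
    have hys : Tendsto (fun s => y - s) (𝓝[>] a) (𝓝 (y - a)) :=
      (tendsto_const_nhds.sub tendsto_id).mono_left nhdsWithin_le_nhds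
    convert (tendsto_const_nhds (x := y - p)).div hys hya.ne' using 2
    · rfl
    · rw [eq_div_iff hya.ne']; ring
  exact le_of_tendsto_of_tendsto tendsto_const_nhds
    ((hμ.mul hL).add ((tendsto_const_nhds.sub hμ).mul tendsto_const_nhds)) hchord

theorem StrictConvexOn.lt_of_tendsto_nhdsGT (hg : StrictConvexOn ℝ (Ioc a b) g)
    (hL : Tendsto g (𝓝[>] a) (𝓝 L)) (hy : y ∈ Ioc a b) (hθ₀ : 0 < θ) (hθ₁ : θ < 1) :
    g (θ * a + (1 - θ) * y) < θ * L + (1 - θ) * g y := by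
  -- `p := θ a + (1 - θ) y` lies strictly between `y` and a point `q` of larger weight on `a`
  obtain ⟨θ', hθθ', hθ'⟩ := exists_between hθ₁
  have hθ'₀ : 0 < θ' := hθ₀.trans hθθ'
  have hya : 0 < y - a := sub_pos.mpr hy.1
  have hqy : θ' * a + (1 - θ') * y < y := by nlinarith
  have hq : θ' * a + (1 - θ') * y ∈ Ioc a b := ⟨by nlinarith, hqy.le.trans hy.2⟩
  have hq_le := hg.convexOn.le_of_tendsto_nhdsGT hL hy hθ'₀.le hθ'
  have hp_lt := hg.2 hq hy hqy.ne (div_pos hθ₀ hθ'₀)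
    (sub_pos.mpr ((div_lt_one hθ'₀).mpr hθθ')) (add_sub_cancel _ _)
  have hcomb : θ / θ' * (θ' * a + (1 - θ') * y) + (1 - θ / θ') * y = θ * a + (1 - θ) * y := by
    field_simp; ring
  rw [smul_eq_mul, smul_eq_mul, hcomb] at hp_lt
  calc g (θ * a + (1 - θ) * y)
      < θ / θ' * g (θ' * a + (1 - θ') * y) + (1 - θ / θ') * g y := hp_lt
    _ ≤ θ / θ' * (θ' * L + (1 - θ') * g y) + (1 - θ / θ') * g y := by gcongr
    _ = θ * L + (1 - θ) * g y := by field_simp; ring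

theorem inv_add_one_combo_eq_div (hn : 0 ≤ n) (A B : ℝ) :
    (n + 1)⁻¹ * A + (1 - (n + 1)⁻¹) * B = (A + n * B) / (n + 1) := by
  field_simp; ring

theorem ConvexOn.add_one_mul_le (hg : ConvexOn ℝ s g) (hx : x ∈ s) (hy : y ∈ s) (hn : 0 ≤ n) :
    (n + 1) * g ((x + n * y) / (n + 1)) ≤ g x + n * g y := by
  have := hg.2 hx hy (by positivity : (0 : ℝ) ≤ (n + 1)⁻¹)
    (sub_nonneg.mpr (inv_le_one_of_one_le₀ (by linarith))) (add_sub_cancel _ 1)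
  simp only [smul_eq_mul, inv_add_one_combo_eq_div hn] at this
  exact (le_div_iff₀' (by positivity)).mp this

theorem StrictConvexOn.add_one_mul_lt (hg : StrictConvexOn ℝ s g) (hx : x ∈ s) (hy : y ∈ s)
    (hxy : x ≠ y) (hn : 0 < n) :
    (n + 1) * g ((x + n * y) / (n + 1)) < g x + n * g y := by
  have := hg.2 hx hy hxy (by positivity : (0 : ℝ) < (n + 1)⁻¹)
    (sub_pos.mpr (inv_lt_one_of_one_lt₀ (by linarith))) (add_sub_cancel _ 1)
  simp only [smul_eq_mul, inv_add_one_combo_eq_div hn.le] at this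
  exact (lt_div_iff₀' (by positivity)).mp this

theorem ConvexOn.add_one_mul_le_of_tendsto_nhdsGT (hg : ConvexOn ℝ (Ioc a b) g)
    (hL : Tendsto g (𝓝[>] a) (𝓝 L)) (hy : y ∈ Ioc a b) (hn : 0 < n) :
    (n + 1) * g ((a + n * y) / (n + 1)) ≤ L + n * g y := by
  have := hg.le_of_tendsto_nhdsGT hL hy (by positivity : (0 : ℝ) ≤ (n + 1)⁻¹)
    (inv_lt_one_of_one_lt₀ (by linarith))
  simp only [inv_add_one_combo_eq_div hn.le] at this
  exact (le_div_iff₀' (by positivity)).mp this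

theorem StrictConvexOn.add_one_mul_lt_of_tendsto_nhdsGT (hg : StrictConvexOn ℝ (Ioc a b) g)
    (hL : Tendsto g (𝓝[>] a) (𝓝 L)) (hy : y ∈ Ioc a b) (hn : 0 < n) :
    (n + 1) * g ((a + n * y) / (n + 1)) < L + n * g y := by
  have := hg.lt_of_tendsto_nhdsGT hL hy (by positivity : (0 : ℝ) < (n + 1)⁻¹)
    (inv_lt_one_of_one_lt₀ (by linarith))
  simp only [inv_add_one_combo_eq_div hn.le] at this
  exact (lt_div_iff₀' (by positivity)).mp this

end ConvexExtension

namespace EReal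

theorem coe_le_add_coe {c s : ℝ} {x : EReal} (hx : x ≠ ⊥) (h : x ≠ ⊤ → c ≤ x.toReal + s) :
    (c : EReal) ≤ x + s := by
  induction x using EReal.rec with
  | bot => exact absurd rfl hx
  | coe r => exact_mod_cast h (coe_ne_top r)
  | top => simp

theorem coe_lt_add_coe {c s : ℝ} {x : EReal} (hx : x ≠ ⊥) (h : x ≠ ⊤ → c < x.toReal + s) :
    (c : EReal) < x + s := by
  induction x using EReal.rec with
  | bot => exact absurd rfl hx
  | coe r => exact_mod_cast h (coe_ne_top r)
  | top => simp

end EReal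

theorem stmt_14_general (d : ℕ) (hd : 2 ≤ d) (f : ℝ → EReal)
    (hne_bot : ∀ t ∈ Set.Icc (0:ℝ) 4, f t ≠ ⊥)
    (hfin : ∀ t ∈ Set.Ioc (0:ℝ) 4, f t ≠ ⊤)
    (hanti : AntitoneOn f (Set.Ioc (0:ℝ) 4))
    (hconv : ConvexOn ℝ (Set.Ioc (0:ℝ) 4) (fun t => (f t).toReal))
    (hlim : Filter.Tendsto f (nhdsWithin 0 (Set.Ioi 0)) (nhds (f 0)))
    (v : Fin (d+1) → EuclideanSpace ℝ (Fin d))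
    (hvnorm : ∀ i, ‖v i‖ = 1)
    (hns : (0 : EuclideanSpace ℝ (Fin d)) ∉ interior (convexHull ℝ (Set.range v))) :
    (⨅ y : Metric.sphere (0 : EuclideanSpace ℝ (Fin d)) 1,
        ∑ i, f (‖(y : EuclideanSpace ℝ (Fin d)) - v i‖^2)) ≤
      min (f 4 + ((d:ℝ) : EReal) * f (2 - 2/(d:ℝ)))
          (f 0 + ((d:ℝ) : EReal) * f (2 + 2/(d:ℝ))) ∧
    (StrictConvexOn ℝ (Set.Ioc (0:ℝ) 4) (fun t => (f t).toReal) →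
      (⨅ y : Metric.sphere (0 : EuclideanSpace ℝ (Fin d)) 1,
          ∑ i, f (‖(y : EuclideanSpace ℝ (Fin d)) - v i‖^2)) <
        min (f 4 + ((d:ℝ) : EReal) * f (2 - 2/(d:ℝ)))
            (f 0 + ((d:ℝ) : EReal) * f (2 + 2/(d:ℝ)))) := by
  set g : ℝ → ℝ := fun t => (f t).toReal
  have hd₂ : (2 : ℝ) ≤ d := by exact_mod_cast hd
  have hd₀ : (0 : ℝ) < d := by linarith
  have h2d : 0 < 2 / (d : ℝ) ∧ 2 / (d : ℝ) ≤ 1 := ⟨by positivity, (div_le_one hd₀).mpr hd₂⟩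
  have h4 : (4 : ℝ) ∈ Ioc 0 4 := by norm_num
  have hsub : (2 - 2 / d : ℝ) ∈ Ioc 0 4 := ⟨by linarith, by linarith⟩
  have hadd : (2 + 2 / d : ℝ) ∈ Ioc 0 4 := ⟨by linarith, by linarith⟩
  have hcoe : ∀ t ∈ Ioc (0 : ℝ) 4, f t = g t := fun t ht =>
    (EReal.coe_toReal (hfin t ht) (hne_bot t (Ioc_subset_Icc_self ht))).symm
  -- `2` is the `(1, d)`-weighted mean both of `4, 2 - 2/d` and of `0, 2 + 2/d`
  have hmid₄ : (4 + d * (2 - 2 / d)) / (d + 1) = (2 : ℝ) := by field_simp; ring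
  have hmid₀ : (0 + d * (2 + 2 / d)) / (d + 1) = (2 : ℝ) := by field_simp; ring
  have hP : ⨅ y : Metric.sphere (0 : EuclideanSpace ℝ (Fin d)) 1,
      ∑ i, f (‖(y : EuclideanSpace ℝ (Fin d)) - v i‖ ^ 2) ≤ (((d + 1) * g 2 : ℝ) : EReal) := by
    have := iInf_sphere_sum_le_card_nsmul (hanti.mono (Icc_subset_Ioc (by norm_num) le_rfl))
      hvnorm hns
    rwa [Fintype.card_fin, hcoe 2 (by norm_num), ← EReal.coe_nsmul, nsmul_eq_mul,
      Nat.cast_succ] at this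
  have hlimg : f 0 ≠ ⊤ → Tendsto g (𝓝[>] 0) (𝓝 (f 0).toReal) := fun h =>
    (EReal.tendsto_toReal h (hne_bot 0 (by norm_num))).comp hlim
  have hf4 : f 4 ≠ ⊥ := hne_bot 4 (by norm_num)
  have hf0 : f 0 ≠ ⊥ := hne_bot 0 (by norm_num)
  rw [hcoe _ hsub, hcoe _ hadd, ← EReal.coe_mul, ← EReal.coe_mul]
  refine ⟨le_min (hP.trans (EReal.coe_le_add_coe hf4 fun _ => ?_))
      (hP.trans (EReal.coe_le_add_coe hf0 fun h => ?_)),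
    fun hsc => lt_min (hP.trans_lt (EReal.coe_lt_add_coe hf4 fun _ => ?_))
      (hP.trans_lt (EReal.coe_lt_add_coe hf0 fun h => ?_))⟩
  · simpa only [hmid₄] using hconv.add_one_mul_le h4 hsub hd₀.le
  · simpa only [hmid₀] using hconv.add_one_mul_le_of_tendsto_nhdsGT (hlimg h) hadd hd₀
  · simpa only [hmid₄] using hsc.add_one_mul_lt h4 hsub (by linarith) hd₀
  · simpa only [hmid₀] using hsc.add_one_mul_lt_of_tendsto_nhdsGT (hlimg h) hadd hd₀

theorem stmt_14 (d : ℕ) (hd : 2 ≤ d) (f : ℝ → EReal)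
    (hne_bot : ∀ t ∈ Set.Icc (0:ℝ) 4, f t ≠ ⊥)
    (hfin : ∀ t ∈ Set.Ioc (0:ℝ) 4, f t ≠ ⊤)
    (hanti : AntitoneOn f (Set.Ioc (0:ℝ) 4))
    (hconv : ConvexOn ℝ (Set.Ioc (0:ℝ) 4) (fun t => (f t).toReal))
    (hlim : Filter.Tendsto f (nhdsWithin 0 (Set.Ioi 0)) (nhds (f 0)))
    (v : Fin (d+1) → EuclideanSpace ℝ (Fin d))
    (hvnorm : ∀ i, ‖v i‖ = 1) (hvinj : Function.Injective v)
    (hns : (0 : EuclideanSpace ℝ (Fin d)) ∉ interior (convexHull ℝ (Set.range v))) :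
    (⨅ y : Metric.sphere (0 : EuclideanSpace ℝ (Fin d)) 1,
        ∑ i, f (‖(y : EuclideanSpace ℝ (Fin d)) - v i‖^2)) ≤
      min (f 4 + ((d:ℝ) : EReal) * f (2 - 2/(d:ℝ)))
          (f 0 + ((d:ℝ) : EReal) * f (2 + 2/(d:ℝ))) ∧
    (StrictConvexOn ℝ (Set.Ioc (0:ℝ) 4) (fun t => (f t).toReal) →
      (⨅ y : Metric.sphere (0 : EuclideanSpace ℝ (Fin d)) 1,
          ∑ i, f (‖(y : EuclideanSpace ℝ (Fin d)) - v i‖^2)) <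
        min (f 4 + ((d:ℝ) : EReal) * f (2 - 2/(d:ℝ)))
            (f 0 + ((d:ℝ) : EReal) * f (2 + 2/(d:ℝ)))) :=
  stmt_14_general d hd f hne_bot hfin hanti hconv hlim v hvnorm hns
end
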